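/- arXiv:1809.06506 — 8 statements merged into one kernel-verified Lean document; each statement's English description precedes it below -/
import Mathlib

section
/- Let I be a finite index set, let (X_i)_{i∈I} be independent random variables on a probability space taking values in {0,1} with P(X_i = 1) = μ_i, and let δ_i ∈ [0,1] be real numbers for i ∈ I. If ∑_{i∈I} δ_i·μ_i ≥ 6, then the random variable Z = ∑_{i∈I} δ_i·X_i satisfies P(Z < 2) ≤ 3/8. -/
open MeasureTheory ProbabilityTheory

/-!
`Z` is a sum of independent `[0,1]`-valued variables `δ i * X i`, so its variance is at most its
mean `m ≥ 6`. Chebyshev's inequality for the deviation `m - 2` below the mean gives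
`P(Z < 2) ≤ m / (m - 2)²`, which is at most `3/8` as soon as `m ≥ 6`.
-/

section

variable {Ω : Type*} [MeasurableSpace Ω] {μ : Measure Ω}

lemma integral_eq_measure_toReal_of_zero_or_one {X : Ω → ℝ} (hX : Measurable X)
    (h01 : ∀ ω, X ω = 0 ∨ X ω = 1) : μ[X] = (μ {ω | X ω = 1}).toReal := by
  rw [← measureReal_def,
    ← integral_indicator_one (s := {ω | X ω = 1}) (hX (measurableSet_singleton 1))]
  congr 1 with ω
  rcases h01 ω with h | h <;> simp [h]

lemma memLp_of_mem_Icc [IsFiniteMeasure μ] {Y : Ω → ℝ} (hm : AEStronglyMeasurable Y μ)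
    (hY : ∀ᵐ ω ∂μ, Y ω ∈ Set.Icc (0 : ℝ) 1) (q : ENNReal) : MemLp Y q μ :=
  MemLp.of_bound hm 1 <| hY.mono fun _ h => by
    rw [Real.norm_eq_abs, abs_le]
    exact ⟨by linarith [h.1], h.2⟩

lemma variance_le_integral_of_mem_Icc [IsProbabilityMeasure μ] {Y : Ω → ℝ}
    (hm : AEStronglyMeasurable Y μ) (hY : ∀ᵐ ω ∂μ, Y ω ∈ Set.Icc (0 : ℝ) 1) :
    variance Y μ ≤ μ[Y] := by
  refine (variance_le_expectation_sq hm).trans <| integral_mono_ae ?_ ?_ ?_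
  · exact (memLp_of_mem_Icc hm hY 2).integrable_sq
  · exact (memLp_of_mem_Icc hm hY 1).integrable le_rfl
  · filter_upwards [hY] with ω h
    simpa [sq] using mul_le_of_le_one_left h.1 h.2

lemma variance_sum_le_integral_sum_of_mem_Icc [IsProbabilityMeasure μ] {ι : Type*} [Fintype ι]
    {Y : ι → Ω → ℝ} (hm : ∀ i, AEStronglyMeasurable (Y i) μ)
    (hY : ∀ i, ∀ᵐ ω ∂μ, Y i ω ∈ Set.Icc (0 : ℝ) 1)
    (hind : Pairwise fun i j => Y i ⟂ᵢ[μ] Y j) :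
    variance (∑ i, Y i) μ ≤ μ[∑ i, Y i] := by
  rw [IndepFun.variance_sum (fun i _ => memLp_of_mem_Icc (hm i) (hY i) 2)
      (fun i _ j _ hij => hind hij)]
  simp only [Finset.sum_apply]
  rw [integral_finsetSum _ (fun i _ => (memLp_of_mem_Icc (hm i) (hY i) 1).integrable le_rfl)]
  exact Finset.sum_le_sum fun i _ => variance_le_integral_of_mem_Icc (hm i) (hY i)

lemma measure_lt_toReal_le_variance_div_sq [IsFiniteMeasure μ] {Z : Ω → ℝ} (hZ : MemLp Z 2 μ)
    {a : ℝ} (ha : a < μ[Z]) :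
    (μ {ω | Z ω < a}).toReal ≤ variance Z μ / (μ[Z] - a) ^ 2 := by
  have hsub : {ω | Z ω < a} ⊆ {ω | μ[Z] - a ≤ |Z ω - μ[Z]|} := fun ω hω => by
    rw [Set.mem_ofPred_eq, abs_sub_comm]
    exact le_abs.2 (Or.inl (by linarith [hω.out]))
  exact ENNReal.toReal_le_of_le_ofReal (div_nonneg (variance_nonneg _ _) (sq_nonneg _))
    ((measure_mono hsub).trans (meas_ge_le_variance_div_sq hZ (sub_pos.2 ha)))

end

/-- If `(X i)` are independent `{0,1}`-valued random variables with `P(X i = 1) = p i`,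
`δ i ∈ [0,1]`, and `∑ i, δ i * p i ≥ 6`, then `Z = ∑ i, δ i * X i` satisfies
`P(Z < 2) ≤ 3/8`. -/
theorem stmt0 {Ω : Type*} [MeasurableSpace Ω] (μ : Measure Ω) [IsProbabilityMeasure μ]
    {I : Type*} [Fintype I]
    (X : I → Ω → ℝ) (hmeas : ∀ i, Measurable (X i))
    (h01 : ∀ i ω, X i ω = 0 ∨ X i ω = 1)
    (hind : iIndepFun X μ)
    (p : I → ℝ) (hp : ∀ i, (μ {ω | X i ω = 1}).toReal = p i)
    (δ : I → ℝ) (hδ : ∀ i, δ i ∈ Set.Icc (0 : ℝ) 1)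
    (hsum : 6 ≤ ∑ i, δ i * p i) :
    (μ {ω | ∑ i, δ i * X i ω < 2}).toReal ≤ 3 / 8 := by
  set Y : I → Ω → ℝ := fun i ω => δ i * X i ω
  have hYm : ∀ i, AEStronglyMeasurable (Y i) μ :=
    fun i => ((hmeas i).const_mul _).aestronglyMeasurable
  have hY : ∀ i, ∀ᵐ ω ∂μ, Y i ω ∈ Set.Icc (0 : ℝ) 1 := fun i => ae_of_all _ fun ω => by
    obtain ⟨h0, h1⟩ := hδ i
    rcases h01 i ω with h | h <;> simp [Y, h, h0, h1]
  have hYind : iIndepFun Y μ := hind.comp (fun i x => δ i * x) (fun i => measurable_const_mul _)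
  have hmean : μ[∑ i, Y i] = ∑ i, δ i * p i := by
    simp only [Finset.sum_apply]
    rw [integral_finsetSum _ (fun i _ => (memLp_of_mem_Icc (hYm i) (hY i) 1).integrable le_rfl)]
    refine Finset.sum_congr rfl fun i _ => ?_
    rw [integral_const_mul, integral_eq_measure_toReal_of_zero_or_one (hmeas i) (h01 i), hp i]
  have hvar : variance (∑ i, Y i) μ ≤ ∑ i, δ i * p i := hmean ▸
    variance_sum_le_integral_sum_of_mem_Icc hYm hY fun i j hij => hYind.indepFun hij
  have hZ : MemLp (∑ i, Y i) 2 μ :=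
    memLp_finsetSum' _ fun i _ => memLp_of_mem_Icc (hYm i) (hY i) 2
  calc (μ {ω | ∑ i, δ i * X i ω < 2}).toReal = (μ {ω | (∑ i, Y i) ω < 2}).toReal := by
        simp only [Y, Finset.sum_apply]
    _ ≤ variance (∑ i, Y i) μ / (μ[∑ i, Y i] - 2) ^ 2 :=
        measure_lt_toReal_le_variance_div_sq hZ (by linarith)
    _ ≤ (∑ i, δ i * p i) / (∑ i, δ i * p i - 2) ^ 2 := by rw [hmean]; gcongr
    _ ≤ 3 / 8 := by
        -- `3m² - 20m + 12 = (3m - 2)(m - 6) ≥ 0`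
        rw [div_le_div_iff₀ (by nlinarith) (by norm_num)]
        nlinarith
end

section
/- Let I be a finite index set and C a finite set; for each i ∈ I let S_i ⊆ C. Let k ≥ 1 be an integer and let p_i ∈ [0,1] for i ∈ I. On a probability space, let (X_i)_{i∈I} be independent random variables taking values in {0,1} with P(X_i = 1) = p_i, and write U = ⋃_{i : X_i = 1} S_i. Fix an element e ∈ C with ∑_{i : e ∈ S_i} p_i ≤ 1/6, let Z_e = ∑_{i : e ∈ S_i} X_i, let K be the event {|U| ≤ k − 1} and L the event {Z_e ≥ 1}. If P(K ∩ L) > 0, then the conditional expectation satisfies E[Z_e | K ∩ L] ≤ 6/5. -/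
/-!
Let `A` be the random set of selected indices, `F` the indices whose set contains `e`, and `𝒦` the
lower set of index sets covering at most `k - 1` elements, so that `K = {A ∈ 𝒦}` and
`L = {A ∩ F ≠ ∅}`. Since `X i` is independent of the other coordinates,
`E[Z; K ∩ L] = ∑_{i ∈ F} P(X i = 1, A ∈ 𝒦) = ∑_{i ∈ F} p i · P(insert i A ∈ 𝒦)`.
On the other hand `K ∩ L` contains the disjoint events "`i` is the only selected index of `F` and
`insert i (A \ F) ∈ 𝒦`", and by independence, the union bound and monotonicity of `𝒦` each of them
has probability at least `(1 - ∑_F p) · p i · P(insert i A ∈ 𝒦)`. Hence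
`(1 - ∑_F p) · E[Z; K ∩ L] ≤ P(K ∩ L)`, and `∑_F p ≤ 1/6` gives the bound `6/5`.
-/

open MeasureTheory ProbabilityTheory Finset

section

variable {Ω ι β : Type*} [MeasurableSpace Ω] {μ : Measure Ω}

theorem DependsOn.preimage_restrict_image {A : Set (ι → β)} {S : Finset ι}
    (hA : DependsOn (· ∈ A) S) : S.restrict ⁻¹' (S.restrict '' A) = A := by
  ext x
  refine ⟨fun ⟨y, hy, hyx⟩ => ?_, fun hx => ⟨x, hx, rfl⟩⟩
  exact (hA fun i hi => congrFun hyx ⟨i, hi⟩).mp hy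

theorem ProbabilityTheory.iIndepFun.measureReal_inter_eq_mul_of_dependsOn
    [MeasurableSpace β] [Countable β] [MeasurableSingletonClass β]
    {X : ι → Ω → β} (hmeas : ∀ i, Measurable (X i)) (hind : iIndepFun X μ)
    {S T : Finset ι} (hST : Disjoint S T) {A B : Set (ι → β)}
    (hA : DependsOn (· ∈ A) S) (hB : DependsOn (· ∈ B) T) :
    μ.real ({ω | (X · ω) ∈ A} ∩ {ω | (X · ω) ∈ B}) =
      μ.real {ω | (X · ω) ∈ A} * μ.real {ω | (X · ω) ∈ B} := by
  have hA' : {ω | (X · ω) ∈ A} = (fun ω (i : S) => X i ω) ⁻¹' (S.restrict '' A) := by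
    conv_lhs => rw [← hA.preimage_restrict_image]
    rfl
  have hB' : {ω | (X · ω) ∈ B} = (fun ω (i : T) => X i ω) ⁻¹' (T.restrict '' B) := by
    conv_lhs => rw [← hB.preimage_restrict_image]
    rfl
  rw [hA', hB', measureReal_def, (hind.indepFun_finset S T hST hmeas).measure_inter_preimage_eq_mul
    _ _ (Set.to_countable _).measurableSet (Set.to_countable _).measurableSet,
    ENNReal.toReal_mul, measureReal_def, measureReal_def]

variable {X : ι → Ω → ℕ}

def selected [Fintype ι] (x : ι → ℕ) : Finset ι := {i | x i = 1}

@[simp]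
theorem mem_selected [Fintype ι] {x : ι → ℕ} {i : ι} : i ∈ selected x ↔ x i = 1 := by
  simp [selected]

theorem biUnion_ite_eq_selected_biUnion {α : Type*} [Fintype ι] [DecidableEq α] (x : ι → ℕ)
    (S : ι → Finset α) : univ.biUnion (fun i => if x i = 1 then S i else ∅) =
      (selected x).biUnion S := by
  ext a
  simp only [mem_biUnion, mem_univ, true_and, mem_selected]
  exact exists_congr fun i => by split_ifs with h <;> simp [h]

theorem measureReal_one_and_selected_mem [Fintype ι] [DecidableEq ι]
    (hmeas : ∀ i, Measurable (X i)) (hind : iIndepFun X μ) (i : ι) (𝒦 : Set (Finset ι)) :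
    μ.real {ω | X i ω = 1 ∧ selected (X · ω) ∈ 𝒦} =
      μ.real {ω | X i ω = 1} * μ.real {ω | insert i (selected (X · ω)) ∈ 𝒦} := by
  have hinsert : {ω | X i ω = 1 ∧ selected (X · ω) ∈ 𝒦} =
      {ω | X i ω = 1} ∩ {ω | insert i (selected (X · ω)) ∈ 𝒦} := by
    ext ω
    simp +contextual [insert_eq_of_mem]
  have hdep_i : DependsOn (· ∈ {x : ι → ℕ | x i = 1}) ↑({i} : Finset ι) :=
    fun x y h => by simp [h i (by simp)]
  have hdep_compl : DependsOn (· ∈ {x | insert i (selected x) ∈ 𝒦}) ↑({i}ᶜ : Finset ι) :=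
    fun x y h => by
      have : insert i (selected x) = insert i (selected y) := by
        ext j
        by_cases hj : j = i
        · simp [hj]
        · simp [hj, h j (by simpa using hj)]
      simp [this]
  rw [hinsert]
  exact hind.measureReal_inter_eq_mul_of_dependsOn hmeas disjoint_compl_right hdep_i hdep_compl

theorem measureReal_one_and_forall_zero (hmeas : ∀ i, Measurable (X i))
    (hind : iIndepFun X μ) {i : ι} {F : Finset ι} (hi : i ∉ F) :
    μ.real {ω | X i ω = 1 ∧ ∀ j ∈ F, X j ω = 0} =
      μ.real {ω | X i ω = 1} * μ.real {ω | ∀ j ∈ F, X j ω = 0} :=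
  hind.measureReal_inter_eq_mul_of_dependsOn (A := {x | x i = 1}) (B := {x | ∀ j ∈ F, x j = 0})
    hmeas (S := {i}) (T := F) (by simpa using hi)
    (fun x y h => by simp [h i (by simp)])
    (fun x y h => by simp +contextual [h _ (mem_coe.2 _)])

theorem one_sub_sum_le_measureReal_forall_zero [IsProbabilityMeasure μ]
    (hmeas : ∀ i, Measurable (X i)) (h01 : ∀ i ω, X i ω = 0 ∨ X i ω = 1) (F : Finset ι) :
    1 - ∑ j ∈ F, μ.real {ω | X j ω = 1} ≤ μ.real {ω | ∀ j ∈ F, X j ω = 0} := by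
  have hcompl : {ω | ∀ j ∈ F, X j ω = 0} = (⋃ j ∈ F, {ω | X j ω = 1})ᶜ := by
    ext ω
    simp only [Set.mem_ofPred_eq, Set.mem_compl_iff, Set.mem_iUnion, not_exists]
    exact forall₂_congr fun j _ => by rcases h01 j ω with h | h <;> simp [h]
  have hunion : MeasurableSet (⋃ j ∈ F, {ω | X j ω = 1}) :=
    F.measurableSet_biUnion fun j _ => hmeas j (measurableSet_singleton 1)
  rw [hcompl, probReal_compl_eq_one_sub hunion]
  linarith [measureReal_biUnion_finset_le (μ := μ) F fun j => {ω | X j ω = 1}]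

theorem one_sub_sum_mul_le_measureReal_one_and_forall_erase_zero [IsProbabilityMeasure μ]
    [DecidableEq ι] (hmeas : ∀ i, Measurable (X i)) (h01 : ∀ i ω, X i ω = 0 ∨ X i ω = 1)
    (hind : iIndepFun X μ) (F : Finset ι) (i : ι) :
    (1 - ∑ j ∈ F, μ.real {ω | X j ω = 1}) * μ.real {ω | X i ω = 1} ≤
      μ.real {ω | X i ω = 1 ∧ ∀ j ∈ F.erase i, X j ω = 0} := by
  rw [measureReal_one_and_forall_zero hmeas hind (F.notMem_erase i), mul_comm]
  have hsum : ∑ j ∈ F.erase i, μ.real {ω | X j ω = 1} ≤ ∑ j ∈ F, μ.real {ω | X j ω = 1} :=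
    sum_le_sum_of_subset_of_nonneg (F.erase_subset i) fun _ _ _ => measureReal_nonneg
  have := one_sub_sum_le_measureReal_forall_zero hmeas h01 (μ := μ) (F.erase i)
  exact mul_le_mul_of_nonneg_left (by linarith) measureReal_nonneg

theorem one_sub_sum_mul_le_measureReal_isolated [Fintype ι] [DecidableEq ι]
    [IsProbabilityMeasure μ] (hmeas : ∀ i, Measurable (X i))
    (h01 : ∀ i ω, X i ω = 0 ∨ X i ω = 1) (hind : iIndepFun X μ) {𝒦 : Set (Finset ι)}
    (h𝒦 : IsLowerSet 𝒦) {F : Finset ι} {i : ι} (hi : i ∈ F) :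
    (1 - ∑ j ∈ F, μ.real {ω | X j ω = 1}) *
        (μ.real {ω | X i ω = 1} * μ.real {ω | insert i (selected (X · ω)) ∈ 𝒦}) ≤
      μ.real {ω | (X i ω = 1 ∧ ∀ j ∈ F.erase i, X j ω = 0) ∧
        insert i (selected (X · ω) \ F) ∈ 𝒦} := by
  have hdep : DependsOn (· ∈ {x : ι → ℕ | x i = 1 ∧ ∀ j ∈ F.erase i, x j = 0}) ↑F :=
    fun x y h => by
      have hxy : ∀ j ∈ F, x j = y j := h
      simp +contextual [hxy, hi]
  have hdep_compl : DependsOn (· ∈ {x | insert i (selected x \ F) ∈ 𝒦}) ↑Fᶜ := fun x y h => by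
    have : selected x \ F = selected y \ F := by
      ext j
      by_cases hj : j ∈ F
      · simp [hj]
      · simp [hj, h j (by simpa using hj)]
    simp [this]
  have hsplit :=
    hind.measureReal_inter_eq_mul_of_dependsOn hmeas disjoint_compl_right hdep hdep_compl
  have hisolated :=
    one_sub_sum_mul_le_measureReal_one_and_forall_erase_zero hmeas h01 hind (μ := μ) F i
  have hmono : μ.real {ω | insert i (selected (X · ω)) ∈ 𝒦} ≤
      μ.real {ω | insert i (selected (X · ω) \ F) ∈ 𝒦} :=
    measureReal_mono fun ω hω => h𝒦 (insert_subset_insert i sdiff_subset) hω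
  calc _ = (1 - ∑ j ∈ F, μ.real {ω | X j ω = 1}) * μ.real {ω | X i ω = 1} *
        μ.real {ω | insert i (selected (X · ω)) ∈ 𝒦} := by ring
    _ ≤ μ.real {ω | X i ω = 1 ∧ ∀ j ∈ F.erase i, X j ω = 0} *
        μ.real {ω | insert i (selected (X · ω)) ∈ 𝒦} :=
      mul_le_mul_of_nonneg_right hisolated measureReal_nonneg
    _ ≤ μ.real {ω | X i ω = 1 ∧ ∀ j ∈ F.erase i, X j ω = 0} *
        μ.real {ω | insert i (selected (X · ω) \ F) ∈ 𝒦} :=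
      mul_le_mul_of_nonneg_left hmono measureReal_nonneg
    _ = _ := hsplit.symm

theorem sum_measureReal_isolated_le [Fintype ι] [DecidableEq ι] [IsFiniteMeasure μ]
    (hmeas : ∀ i, Measurable (X i)) {𝒦 : Set (Finset ι)} (h𝒦 : IsLowerSet 𝒦) (F : Finset ι) :
    ∑ i ∈ F, μ.real {ω | (X i ω = 1 ∧ ∀ j ∈ F.erase i, X j ω = 0) ∧
        insert i (selected (X · ω) \ F) ∈ 𝒦} ≤
      μ.real ({ω | selected (X · ω) ∈ 𝒦} ∩ {ω | 1 ≤ ∑ j ∈ F, X j ω}) := by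
  have hdisj : (↑F : Set ι).PairwiseDisjoint fun i => {ω | (X i ω = 1 ∧
      ∀ j ∈ F.erase i, X j ω = 0) ∧ insert i (selected (X · ω) \ F) ∈ 𝒦} := by
    intro i _ j hj hij
    refine Set.disjoint_left.2 fun ω ⟨⟨_, hzero⟩, _⟩ ⟨⟨hone, _⟩, _⟩ => ?_
    simp [hzero j (mem_erase.2 ⟨Ne.symm hij, hj⟩)] at hone
  have hmeas_isolated : ∀ i, MeasurableSet {ω | (X i ω = 1 ∧ ∀ j ∈ F.erase i, X j ω = 0) ∧
      insert i (selected (X · ω) \ F) ∈ 𝒦} := fun i =>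
    measurable_pi_lambda _ hmeas (Set.to_countable {x : ι → ℕ |
      (x i = 1 ∧ ∀ j ∈ F.erase i, x j = 0) ∧ insert i (selected x \ F) ∈ 𝒦}).measurableSet
  rw [← measureReal_biUnion_finset hdisj fun i _ => hmeas_isolated i]
  refine measureReal_mono (Set.iUnion₂_subset fun i hi ω ⟨⟨hone, hzero⟩, hmem⟩ => ⟨?_, ?_⟩)
  · refine h𝒦 (fun j hj => ?_) hmem
    by_cases hji : j = i
    · simp [hji]
    · by_cases hjF : j ∈ F
      · simp [hzero j (mem_erase.2 ⟨hji, hjF⟩)] at hj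
      · simp_all
  · exact hone.symm.le.trans (single_le_sum (f := (X · ω)) (fun _ _ => Nat.zero_le _) hi)

theorem setIntegral_sum_eq_sum_measureReal [IsFiniteMeasure μ] (hmeas : ∀ i, Measurable (X i))
    (h01 : ∀ i ω, X i ω = 0 ∨ X i ω = 1) (F : Finset ι) (s : Set Ω) :
    ∫ ω in s, ((∑ i ∈ F, X i ω : ℕ) : ℝ) ∂μ = ∑ i ∈ F, μ.real ({ω | X i ω = 1} ∩ s) := by
  have hindicator : ∀ i, (fun ω => (X i ω : ℝ)) = Set.indicator {ω | X i ω = 1} 1 :=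
    fun i => funext fun ω => by rcases h01 i ω with h | h <;> simp [h]
  have hone : ∀ i, MeasurableSet {ω | X i ω = 1} := fun i => hmeas i (measurableSet_singleton 1)
  push_cast
  rw [integral_finsetSum F fun i _ => by
    rw [hindicator i]; exact (integrable_const 1).indicator (hone i)]
  refine sum_congr rfl fun i _ => ?_
  rw [hindicator i, integral_indicator_one (hone i), measureReal_restrict_apply (hone i)]

theorem one_sub_sum_mul_setIntegral_le [Fintype ι] [DecidableEq ι] [IsProbabilityMeasure μ]
    (hmeas : ∀ i, Measurable (X i)) (h01 : ∀ i ω, X i ω = 0 ∨ X i ω = 1) (hind : iIndepFun X μ)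
    {𝒦 : Set (Finset ι)} (h𝒦 : IsLowerSet 𝒦) (F : Finset ι) :
    (1 - ∑ i ∈ F, μ.real {ω | X i ω = 1}) *
        ∫ ω in {ω | selected (X · ω) ∈ 𝒦} ∩ {ω | 1 ≤ ∑ i ∈ F, X i ω},
          ((∑ i ∈ F, X i ω : ℕ) : ℝ) ∂μ ≤
      μ.real ({ω | selected (X · ω) ∈ 𝒦} ∩ {ω | 1 ≤ ∑ i ∈ F, X i ω}) := by
  have hhit : ∀ i ∈ F, {ω | X i ω = 1} ∩ ({ω | selected (X · ω) ∈ 𝒦} ∩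
      {ω | 1 ≤ ∑ j ∈ F, X j ω}) = {ω | X i ω = 1 ∧ selected (X · ω) ∈ 𝒦} := fun i hi => by
    ext ω
    refine ⟨fun ⟨hone, hmem, _⟩ => ⟨hone, hmem⟩, fun ⟨hone, hmem⟩ => ⟨hone, hmem, ?_⟩⟩
    exact hone.symm.le.trans (single_le_sum (f := (X · ω)) (fun _ _ => Nat.zero_le _) hi)
  rw [setIntegral_sum_eq_sum_measureReal hmeas h01, mul_sum]
  calc _ = ∑ i ∈ F, (1 - ∑ j ∈ F, μ.real {ω | X j ω = 1}) *
        (μ.real {ω | X i ω = 1} * μ.real {ω | insert i (selected (X · ω)) ∈ 𝒦}) :=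
      sum_congr rfl fun i hi => by rw [hhit i hi, measureReal_one_and_selected_mem hmeas hind]
    _ ≤ _ := sum_le_sum fun i hi => one_sub_sum_mul_le_measureReal_isolated hmeas h01 hind h𝒦 hi
    _ ≤ _ := sum_measureReal_isolated_le hmeas h𝒦 F

end

theorem stmt1_general {Ω : Type*} [MeasurableSpace Ω] (μ : Measure Ω) [IsProbabilityMeasure μ]
    {I : Type*} [Fintype I] {C : Type*} [DecidableEq C]
    (S : I → Finset C) (k : ℕ)
    (p : I → ℝ)
    (X : I → Ω → ℕ) (hmeas : ∀ i, Measurable (X i))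
    (h01 : ∀ i ω, X i ω = 0 ∨ X i ω = 1)
    (hind : iIndepFun X μ)
    (hp : ∀ i, (μ {ω | X i ω = 1}).toReal = p i)
    (U : Ω → Finset C)
    (hU : ∀ ω, U ω = Finset.univ.biUnion fun i => if X i ω = 1 then S i else ∅)
    (e : C) (he : ∑ i ∈ Finset.univ.filter (fun i => e ∈ S i), p i ≤ 1 / 6)
    (Z : Ω → ℕ) (hZ : ∀ ω, Z ω = ∑ i ∈ Finset.univ.filter (fun i => e ∈ S i), X i ω)
    (K : Set Ω) (hK : K = {ω | (U ω).card ≤ k - 1})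
    (L : Set Ω) (hL : L = {ω | 1 ≤ Z ω}) :
    ∫ ω, (Z ω : ℝ) ∂(μ[|K ∩ L]) ≤ 6 / 5 := by
  classical
  obtain rfl : p = fun i => μ.real {ω | X i ω = 1} := funext fun i => (hp i).symm
  have h𝒦 : IsLowerSet {A : Finset I | (A.biUnion S).card ≤ k - 1} := fun _ _ hBA hA =>
    (card_le_card (biUnion_subset_biUnion_of_subset_left S hBA)).trans hA
  have hbound := one_sub_sum_mul_setIntegral_le hmeas h01 hind h𝒦 (univ.filter (e ∈ S ·))
  have hKsel : K = {ω | selected (X · ω) ∈ {A : Finset I | (A.biUnion S).card ≤ k - 1}} := by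
    simp_rw [hK, hU, biUnion_ite_eq_selected_biUnion]
    rfl
  simp_rw [← hZ] at hbound
  rw [← hKsel, ← hL] at hbound
  have hcond : ∫ ω, (Z ω : ℝ) ∂(μ[|K ∩ L]) = (μ.real (K ∩ L))⁻¹ * ∫ ω in K ∩ L, (Z ω : ℝ) ∂μ := by
    rw [ProbabilityTheory.cond, integral_smul_measure, ENNReal.toReal_inv, smul_eq_mul, measureReal_def]
  have hfive_sixths : 5 / 6 * ∫ ω in K ∩ L, (Z ω : ℝ) ∂μ ≤ μ.real (K ∩ L) :=
    (mul_le_mul_of_nonneg_right (by linarith) (integral_nonneg fun _ => Nat.cast_nonneg _)).trans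
      hbound
  rw [hcond]
  rcases (measureReal_nonneg (μ := μ) (s := K ∩ L)).eq_or_lt with hzero | hpos
  · rw [← hzero, inv_zero, zero_mul]
    norm_num
  · rw [inv_mul_le_iff₀ hpos]
    linarith

/-- Independent `{0,1}` random variables `X i` select sets `S i ⊆ C`; `U` is the random
covered set. For a fixed element `e` with `∑_{i : e ∈ S i} p i ≤ 1/6`, conditioned on
the event that at most `k - 1` elements are covered and `e` is covered, the expected
number of selected sets containing `e` is at most `6/5`. -/
theorem stmt1 {Ω : Type*} [MeasurableSpace Ω] (μ : Measure Ω) [IsProbabilityMeasure μ]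
    {I : Type*} [Fintype I] {C : Type*} [Fintype C] [DecidableEq C]
    (S : I → Finset C) (k : ℕ) (hk : 1 ≤ k)
    (p : I → ℝ) (hp01 : ∀ i, p i ∈ Set.Icc (0 : ℝ) 1)
    (X : I → Ω → ℕ) (hmeas : ∀ i, Measurable (X i))
    (h01 : ∀ i ω, X i ω = 0 ∨ X i ω = 1)
    (hind : iIndepFun X μ)
    (hp : ∀ i, (μ {ω | X i ω = 1}).toReal = p i)
    (U : Ω → Finset C)
    (hU : ∀ ω, U ω = Finset.univ.biUnion fun i => if X i ω = 1 then S i else ∅)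
    (e : C) (he : ∑ i ∈ Finset.univ.filter (fun i => e ∈ S i), p i ≤ 1 / 6)
    (Z : Ω → ℕ) (hZ : ∀ ω, Z ω = ∑ i ∈ Finset.univ.filter (fun i => e ∈ S i), X i ω)
    (K : Set Ω) (hK : K = {ω | (U ω).card ≤ k - 1})
    (L : Set Ω) (hL : L = {ω | 1 ≤ Z ω})
    (hpos : 0 < μ (K ∩ L)) :
    ∫ ω, (Z ω : ℝ) ∂(μ[|K ∩ L]) ≤ 6 / 5 :=
  stmt1_general μ S k p X hmeas h01 hind hp U hU e he Z hZ K hK L hL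
end

section
/- Let I be a finite index set and C a finite set; for each i ∈ I let S_i ⊆ C. Let k ≥ 1 be an integer and let p_i ∈ [0,1] for i ∈ I. On a probability space, let (X_i)_{i∈I} be independent random variables taking values in {0,1} with P(X_i = 1) = p_i, and write U = ⋃_{i : X_i = 1} S_i. Assume (H1) ∑_{i∈I} p_i · min(|S_i|, k) ≥ 6k, and (H2) for every e ∈ C, ∑_{i : e ∈ S_i} p_i ≤ 1/6. Let Z = (1/k)·∑_{i∈I} X_i · min(|S_i|, k) and let K be the event {|U| ≤ k − 1}. If P(K) > 0, then P(Z < 2 | K) ≥ 2/5. -/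
/-!
Encode the outcome of `(X i)` as a configuration `f : I → Bool`; its law is the product weight
`bernoulliWeight p`. On `K` every selected set has fewer than `k` elements, so `k Z` is the
total multiplicity `T = ∑_{i selected} |S i| = ∑_e #{selected i with e ∈ S i}`. Fix `e` and a
selected `i ∋ e`: switching off the other sets through `e` keeps the configuration in `K`
(`K` is down-closed), costs at most the factor `∏ (1 - p j) ≥ 5/6` by independence, and the
resulting events are disjoint and force `e ∈ U`. Summing over `e`,
`(5/6) E[T; K] ≤ E[|U|; K] ≤ (k - 1) P(K)`, and Markov's inequality gives
`P(T ≥ 2k, K) ≤ (3/5) P(K)`.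
-/

open MeasureTheory ProbabilityTheory Finset

lemma one_sub_sum_le_prod_one_sub {ι : Type*} {p : ι → ℝ} {s : Finset ι}
    (h0 : ∀ i ∈ s, 0 ≤ p i) (h1 : ∀ i ∈ s, p i ≤ 1) :
    1 - ∑ i ∈ s, p i ≤ ∏ i ∈ s, (1 - p i) := by
  classical
  induction s using Finset.induction_on with
  | empty => simp
  | insert j s hj ih =>
    simp only [mem_insert, forall_eq_or_imp] at h0 h1
    rw [prod_insert hj, sum_insert hj]
    have hs : 0 ≤ ∑ i ∈ s, p i := sum_nonneg h0.2
    have hprod := ih h0.2 h1.2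
    nlinarith [h0.1, h1.1]

lemma mul_sum_filter_le_sum_mul {α : Type*} (s : Finset α) {g w : α → ℝ}
    (hg : ∀ a ∈ s, 0 ≤ g a) (hw : ∀ a ∈ s, 0 ≤ w a) (t : ℝ) :
    t * ∑ a ∈ s.filter (fun a => t ≤ g a), w a ≤ ∑ a ∈ s, g a * w a := by
  rw [mul_sum, sum_filter]
  refine sum_le_sum fun a ha => ?_
  split_ifs with h
  · exact mul_le_mul_of_nonneg_right h (hw a ha)
  · exact mul_nonneg (hg a ha) (hw a ha)

lemma sum_card_mul_eq_sum_sum_filter_mem {α C : Type*} [Fintype C] [DecidableEq C]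
    (A : Finset α) (t : α → Finset C) (w : α → ℝ) :
    ∑ a ∈ A, (#(t a) : ℝ) * w a = ∑ e, ∑ a ∈ A.filter (fun a => e ∈ t a), w a := by
  simp only [sum_filter]
  rw [sum_comm]
  refine sum_congr rfl fun a _ => ?_
  rw [sum_ite_mem, univ_inter, sum_const, nsmul_eq_mul]

section BernoulliWeight

variable {I : Type*} [Fintype I]

def bernoulliWeight (p : I → ℝ) (f : I → Bool) : ℝ := ∏ i, if f i then p i else 1 - p i

variable {p : I → ℝ}

lemma bernoulliWeight_nonneg (hp : ∀ i, p i ∈ Set.Icc (0 : ℝ) 1) (f : I → Bool) :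
    0 ≤ bernoulliWeight p f :=
  prod_nonneg fun i _ => by split <;> linarith [(hp i).1, (hp i).2]

variable [DecidableEq I]

lemma bernoulliWeight_update_mul (f : I → Bool) {j : I} (hj : f j = false) :
    (1 - p j) * bernoulliWeight p (Function.update f j true) = p j * bernoulliWeight p f := by
  simp only [bernoulliWeight, ← mul_prod_erase univ _ (mem_univ j), Function.update_self, hj]
  rw [prod_congr rfl fun i hi => by rw [Function.update_of_ne (ne_of_mem_erase hi)]]
  simp only [if_true, Bool.false_eq_true, if_false]
  ring

lemma sum_bernoulliWeight_filter_eq_false {P : (I → Bool) → Prop} [DecidablePred P] (j : I)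
    (hP : ∀ f b, P (Function.update f j b) ↔ P f) :
    ∑ f ∈ univ.filter (fun f => P f ∧ f j = false), bernoulliWeight p f
      = (1 - p j) * ∑ f ∈ univ.filter P, bernoulliWeight p f := by
  have hflip : ∑ f ∈ univ.filter (fun f => P f ∧ f j = false),
        bernoulliWeight p (Function.update f j true)
      = ∑ f ∈ univ.filter (fun f => P f ∧ f j = true), bernoulliWeight p f :=
    sum_nbij' (fun f => Function.update f j true) (fun f => Function.update f j false)
      (fun f hf => by simp_all) (fun f hf => by simp_all)
      (fun f hf => by simp_all [← (mem_filter.1 hf).2.2])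
      (fun f hf => by simp_all [← (mem_filter.1 hf).2.2]) (fun _ _ => rfl)
  have hsplit := sum_filter_add_sum_filter_not (univ.filter P) (fun f => f j = false)
    (bernoulliWeight p)
  simp only [filter_filter, Bool.not_eq_false] at hsplit
  have hmul : (1 - p j) * ∑ f ∈ univ.filter (fun f => P f ∧ f j = false),
        bernoulliWeight p (Function.update f j true)
      = p j * ∑ f ∈ univ.filter (fun f => P f ∧ f j = false), bernoulliWeight p f := by
    rw [mul_sum, mul_sum]
    exact sum_congr rfl fun f hf => bernoulliWeight_update_mul f (mem_filter.1 hf).2.2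
  rw [← hsplit, ← hflip]
  linear_combination -hmul

lemma sum_bernoulliWeight_filter_forall_eq_false {P : (I → Bool) → Prop} [DecidablePred P]
    (F : Finset I) (hP : ∀ j ∈ F, ∀ f b, P (Function.update f j b) ↔ P f) :
    ∑ f ∈ univ.filter (fun f => P f ∧ ∀ j ∈ F, f j = false), bernoulliWeight p f
      = (∏ j ∈ F, (1 - p j)) * ∑ f ∈ univ.filter P, bernoulliWeight p f := by
  induction F using Finset.induction_on with
  | empty => simp
  | insert j F hj ih =>
    have hPF : ∀ f b, (P (Function.update f j b) ∧ ∀ l ∈ F, Function.update f j b l = false)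
        ↔ (P f ∧ ∀ l ∈ F, f l = false) := by
      intro f b
      rw [hP j (mem_insert_self j F)]
      refine and_congr_right fun _ => forall₂_congr fun l hl => ?_
      rw [Function.update_of_ne (ne_of_mem_of_not_mem hl hj)]
    rw [prod_insert hj, mul_assoc, ← ih fun l hl => hP l (mem_insert_of_mem hl),
      ← sum_bernoulliWeight_filter_eq_false j hPF]
    simp only [forall_mem_insert, and_assoc, and_comm (a := _ = false)]

lemma prod_one_sub_mul_sum_bernoulliWeight_le {Q : (I → Bool) → Prop} [DecidablePred Q]
    (hQ : Antitone Q) (hp : ∀ i, p i ∈ Set.Icc (0 : ℝ) 1) {F : Finset I} {i : I}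
    (hi : i ∉ F) :
    (∏ j ∈ F, (1 - p j)) *
        ∑ f ∈ univ.filter (fun f => Q f ∧ f i = true), bernoulliWeight p f
      ≤ ∑ f ∈ univ.filter (fun f => (Q f ∧ f i = true) ∧ ∀ j ∈ F, f j = false),
          bernoulliWeight p f := by
  -- `Q (reset f)` ignores the coordinates in `F`, and `Q f` implies it since `Q` is down-closed.
  set reset : (I → Bool) → I → Bool := fun f => F.piecewise (fun _ => false) f
  have hw := bernoulliWeight_nonneg hp
  have hreset : ∀ j ∈ F, ∀ f b, reset (Function.update f j b) = reset f := fun j hj f b =>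
    F.piecewise_congr (fun _ _ => rfl) fun l hl =>
      Function.update_of_ne (ne_of_mem_of_not_mem hj hl).symm b f
  have hsplit := sum_bernoulliWeight_filter_forall_eq_false (p := p)
    (P := fun f => Q (reset f) ∧ f i = true) F fun j hj f b => by
      rw [hreset j hj, Function.update_of_ne (ne_of_mem_of_not_mem hj hi).symm]
  calc (∏ j ∈ F, (1 - p j)) *
        ∑ f ∈ univ.filter (fun f => Q f ∧ f i = true), bernoulliWeight p f
      ≤ (∏ j ∈ F, (1 - p j)) *
          ∑ f ∈ univ.filter (fun f => Q (reset f) ∧ f i = true), bernoulliWeight p f := by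
        refine mul_le_mul_of_nonneg_left (sum_le_sum_of_subset_of_nonneg (fun f hf => ?_)
          fun f _ _ => hw f) (prod_nonneg fun j _ => sub_nonneg.2 (hp j).2)
        obtain ⟨hQf, hfi⟩ := (mem_filter.1 hf).2
        have hle : reset f ≤ f := piecewise_le_of_le_of_le _ (fun _ => Bool.false_le _) le_rfl
        exact mem_filter.2 ⟨mem_univ f, hQ hle hQf, hfi⟩
    _ = _ := hsplit.symm
    _ = _ := by
        refine sum_congr (filter_congr fun f _ => ?_) fun _ _ => rfl
        refine and_congr_left fun hoff => and_congr_left fun _ => ?_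
        have hfixed : reset f = f := funext fun l => by
          by_cases hl : l ∈ F <;> simp [reset, hl, hoff]
        rw [hfixed]

theorem one_sub_sum_mul_sum_bernoulliWeight_le {Q : (I → Bool) → Prop} [DecidablePred Q]
    (hQ : Antitone Q) (hp : ∀ i, p i ∈ Set.Icc (0 : ℝ) 1) (E : Finset I) :
    (1 - ∑ i ∈ E, p i) * ∑ i ∈ E, ∑ f ∈ univ.filter (fun f => Q f ∧ f i = true),
        bernoulliWeight p f
      ≤ ∑ f ∈ univ.filter (fun f => Q f ∧ ∃ i ∈ E, f i = true),
          bernoulliWeight p f := by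
  set G : I → Finset (I → Bool) := fun i =>
    univ.filter fun f => (Q f ∧ f i = true) ∧ ∀ j ∈ E.erase i, f j = false
  have hw := bernoulliWeight_nonneg hp
  have hG : ∀ i ∈ E, (1 - ∑ i ∈ E, p i) *
      ∑ f ∈ univ.filter (fun f => Q f ∧ f i = true), bernoulliWeight p f
        ≤ ∑ f ∈ G i, bernoulliWeight p f := by
    intro i hi
    have hprod : 1 - ∑ i ∈ E, p i ≤ ∏ j ∈ E.erase i, (1 - p j) :=
      (sub_le_sub_left (sum_le_sum_of_subset_of_nonneg (erase_subset i E)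
        fun j _ _ => (hp j).1) 1).trans
        (one_sub_sum_le_prod_one_sub (fun j _ => (hp j).1) fun j _ => (hp j).2)
    exact (mul_le_mul_of_nonneg_right hprod (sum_nonneg fun f _ => hw f)).trans
      (prod_one_sub_mul_sum_bernoulliWeight_le hQ hp (notMem_erase i E))
  have hdisj : (E : Set I).PairwiseDisjoint G := by
    intro i hi i' _ hne
    refine disjoint_left.2 fun f hf hf' => ?_
    have h1 := (mem_filter.1 hf).2.1.2
    have h2 := (mem_filter.1 hf').2.2 i (mem_erase.2 ⟨hne, hi⟩)
    simp_all
  have hsub : E.biUnion G ⊆ univ.filter (fun f => Q f ∧ ∃ i ∈ E, f i = true) := by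
    intro f hf
    obtain ⟨i, hi, hf⟩ := mem_biUnion.1 hf
    obtain ⟨⟨hQf, hfi⟩, -⟩ := (mem_filter.1 hf).2
    exact mem_filter.2 ⟨mem_univ f, hQf, i, hi, hfi⟩
  calc (1 - ∑ i ∈ E, p i) * ∑ i ∈ E, ∑ f ∈ univ.filter (fun f => Q f ∧ f i = true),
        bernoulliWeight p f
      ≤ ∑ i ∈ E, ∑ f ∈ G i, bernoulliWeight p f := by rw [mul_sum]; exact sum_le_sum hG
    _ = ∑ f ∈ E.biUnion G, bernoulliWeight p f := (sum_biUnion hdisj).symm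
    _ ≤ _ := sum_le_sum_of_subset_of_nonneg hsub fun f _ _ => hw f

end BernoulliWeight

section Cover

variable {I C : Type*} [Fintype I] [DecidableEq C] (S : I → Finset C)

def coveredSet (f : I → Bool) : Finset C := univ.biUnion fun i => if f i then S i else ∅

def coverCount (f : I → Bool) : ℕ := ∑ i, if f i then #(S i) else 0

variable {S}

lemma mem_coveredSet {f : I → Bool} {e : C} :
    e ∈ coveredSet S f ↔ ∃ i, f i = true ∧ e ∈ S i := by
  simp only [coveredSet, mem_biUnion, mem_univ, true_and]
  refine exists_congr fun i => ?_
  cases f i <;> simp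

lemma subset_coveredSet {f : I → Bool} {i : I} (hi : f i = true) : S i ⊆ coveredSet S f :=
  fun _ he => mem_coveredSet.2 ⟨i, hi, he⟩

lemma coveredSet_mono : Monotone (coveredSet S) := by
  intro f g hfg e he
  obtain ⟨i, hi, he⟩ := mem_coveredSet.1 he
  exact subset_coveredSet (Bool.le_iff_imp.1 (hfg i) hi) he

lemma sum_mul_min_card_eq_coverCount {x : I → ℕ} (hx : ∀ i, x i = 0 ∨ x i = 1) {k : ℕ}
    (hk : #(coveredSet S fun i => decide (x i = 1)) ≤ k) :
    ∑ i, (x i : ℝ) * min (#(S i) : ℝ) k = coverCount S fun i => decide (x i = 1) := by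
  rw [coverCount, Nat.cast_sum]
  refine sum_congr rfl fun i _ => ?_
  rcases hx i with h | h
  · simp [h]
  · have hSi : (#(S i) : ℝ) ≤ k := by
      exact_mod_cast (card_le_card (subset_coveredSet (by simp [h]))).trans hk
    simp [h, hSi]

variable (S)

lemma sum_coverCount_mul_eq [Fintype C] (A : Finset (I → Bool)) (w : (I → Bool) → ℝ) :
    ∑ f ∈ A, (coverCount S f : ℝ) * w f
      = ∑ e, ∑ i ∈ univ.filter (fun i => e ∈ S i),
          ∑ f ∈ A.filter (fun f => f i = true), w f := by
  calc ∑ f ∈ A, (coverCount S f : ℝ) * w f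
      = ∑ i, (#(S i) : ℝ) * ∑ f ∈ A.filter (fun f => f i = true), w f := by
        simp only [coverCount, Nat.cast_sum, Nat.cast_ite, Nat.cast_zero, sum_mul, mul_sum,
          ite_mul, zero_mul, sum_filter]
        rw [sum_comm]
        simp only [mul_ite, mul_zero]
    _ = _ := sum_card_mul_eq_sum_sum_filter_mem _ _ _

theorem one_sub_mul_sum_coverCount_mul_le [Fintype C] [DecidableEq I] {p : I → ℝ}
    (hp : ∀ i, p i ∈ Set.Icc (0 : ℝ) 1) {δ : ℝ}
    (hδ : ∀ e, ∑ i ∈ univ.filter (fun i => e ∈ S i), p i ≤ δ)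
    {Q : (I → Bool) → Prop} [DecidablePred Q] (hQ : Antitone Q) :
    (1 - δ) * ∑ f ∈ univ.filter Q, (coverCount S f : ℝ) * bernoulliWeight p f
      ≤ ∑ f ∈ univ.filter Q, (#(coveredSet S f) : ℝ) * bernoulliWeight p f := by
  rw [sum_coverCount_mul_eq, sum_card_mul_eq_sum_sum_filter_mem, mul_sum]
  refine sum_le_sum fun e _ => ?_
  set E := univ.filter fun i => e ∈ S i
  simp only [filter_filter]
  calc (1 - δ) *
        ∑ i ∈ E, ∑ f ∈ univ.filter (fun f => Q f ∧ f i = true), bernoulliWeight p f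
      ≤ (1 - ∑ i ∈ E, p i) *
          ∑ i ∈ E, ∑ f ∈ univ.filter (fun f => Q f ∧ f i = true), bernoulliWeight p f :=
        mul_le_mul_of_nonneg_right (by linarith [hδ e])
          (sum_nonneg fun i _ => sum_nonneg fun f _ => bernoulliWeight_nonneg hp f)
    _ ≤ ∑ f ∈ univ.filter (fun f => Q f ∧ ∃ i ∈ E, f i = true), bernoulliWeight p f :=
        one_sub_sum_mul_sum_bernoulliWeight_le hQ hp E
    _ = _ := by
        refine sum_congr (filter_congr fun f _ => ?_) fun _ _ => rfl
        simp [E, mem_coveredSet, and_comm]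

theorem mul_sum_bernoulliWeight_coverCount_ge_le [Fintype C] [DecidableEq I] {p : I → ℝ}
    (hp : ∀ i, p i ∈ Set.Icc (0 : ℝ) 1) {δ : ℝ} (hδ1 : δ ≤ 1)
    (hδ : ∀ e, ∑ i ∈ univ.filter (fun i => e ∈ S i), p i ≤ δ) (m : ℕ) (t : ℝ) :
    (1 - δ) * t * ∑ f ∈ (univ.filter fun f => #(coveredSet S f) ≤ m).filter
        (fun f => t ≤ coverCount S f), bernoulliWeight p f
      ≤ m * ∑ f ∈ univ.filter (fun f => #(coveredSet S f) ≤ m), bernoulliWeight p f := by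
  have hw := bernoulliWeight_nonneg hp
  have hQ : Antitone fun f => #(coveredSet S f) ≤ m :=
    fun f g hfg hg => (card_le_card (coveredSet_mono hfg)).trans hg
  have hmarkov := mul_sum_filter_le_sum_mul (univ.filter fun f => #(coveredSet S f) ≤ m)
    (fun f _ => Nat.cast_nonneg (coverCount S f)) (fun f _ => hw f) t
  have hcover : ∑ f ∈ univ.filter (fun f => #(coveredSet S f) ≤ m),
        (#(coveredSet S f) : ℝ) * bernoulliWeight p f
      ≤ m * ∑ f ∈ univ.filter (fun f => #(coveredSet S f) ≤ m), bernoulliWeight p f := by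
    rw [mul_sum]
    exact sum_le_sum fun f hf =>
      mul_le_mul_of_nonneg_right (by exact_mod_cast (mem_filter.1 hf).2) (hw f)
  calc (1 - δ) * t * _ ≤ (1 - δ) * _ := by
        rw [mul_assoc]; exact mul_le_mul_of_nonneg_left hmarkov (by linarith)
    _ ≤ _ := one_sub_mul_sum_coverCount_mul_le S hp hδ hQ
    _ ≤ _ := hcover

theorem two_fifths_mul_sum_bernoulliWeight_le_coverCount_lt [Fintype C] [DecidableEq I]
    {p : I → ℝ} (hp : ∀ i, p i ∈ Set.Icc (0 : ℝ) 1)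
    (hS : ∀ e, ∑ i ∈ univ.filter (fun i => e ∈ S i), p i ≤ 1 / 6) {k : ℕ}
    (hk : 1 ≤ k) :
    2 / 5 * ∑ f ∈ univ.filter (fun f => #(coveredSet S f) ≤ k - 1), bernoulliWeight p f
      ≤ ∑ f ∈ (univ.filter fun f => #(coveredSet S f) ≤ k - 1).filter
          (fun f => coverCount S f < 2 * k), bernoulliWeight p f := by
  set K := univ.filter fun f => #(coveredSet S f) ≤ k - 1
  have hbound := mul_sum_bernoulliWeight_coverCount_ge_le S hp (by norm_num) hS (k - 1) (2 * k)
  have hsplit := sum_filter_add_sum_filter_not K (fun f => coverCount S f < 2 * k)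
    (bernoulliWeight p)
  have hge : K.filter (fun f => ¬coverCount S f < 2 * k)
      = K.filter (fun f => (2 * k : ℝ) ≤ coverCount S f) :=
    filter_congr fun f _ => by rw [not_lt]; exact_mod_cast Iff.rfl
  rw [hge] at hsplit
  have hK : 0 ≤ ∑ f ∈ K, bernoulliWeight p f :=
    sum_nonneg fun f _ => bernoulliWeight_nonneg hp f
  have hk0 : (0 : ℝ) < k := by exact_mod_cast hk
  have hk1 : ((k - 1 : ℕ) : ℝ) * ∑ f ∈ K, bernoulliWeight p f
      ≤ k * ∑ f ∈ K, bernoulliWeight p f :=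
    mul_le_mul_of_nonneg_right (by exact_mod_cast Nat.sub_le k 1) hK
  nlinarith

end Cover

section Measure

variable {Ω : Type*} [MeasurableSpace Ω] {μ : Measure Ω}

lemma measureReal_preimage_eq_sum_bernoulliWeight [IsProbabilityMeasure μ] {I : Type*} [Fintype I]
    {Y : I → Ω → Bool} (hY : ∀ i, Measurable (Y i)) (hind : iIndepFun Y μ) {p : I → ℝ}
    (hp : ∀ i, μ.real {ω | Y i ω = true} = p i) (A : Finset (I → Bool)) :
    μ.real ((fun ω i => Y i ω) ⁻¹' A) = ∑ f ∈ A, bernoulliWeight p f := by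
  have hcell : ∀ f : I → Bool,
      (fun ω i => Y i ω) ⁻¹' {f} = ⋂ i ∈ univ, Y i ⁻¹' {f i} :=
    fun f => by ext ω; simp [funext_iff]
  rw [← sum_measureReal_preimage_singleton A fun f _ =>
    measurable_pi_lambda _ hY (measurableSet_singleton f)]
  refine sum_congr rfl fun f _ => ?_
  rw [hcell, measureReal_def, hind.measure_inter_preimage_eq_mul _
    fun i _ => measurableSet_singleton _, ENNReal.toReal_prod]
  refine prod_congr rfl fun i _ => ?_
  have htrue : MeasurableSet {ω | Y i ω = true} := hY i (measurableSet_singleton true)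
  cases f i
  · have hcompl : Y i ⁻¹' {false} = {ω | Y i ω = true}ᶜ := by ext ω; simp
    rw [hcompl, ← measureReal_def, probReal_compl_eq_one_sub htrue, hp]
    rfl
  · exact hp i

lemma ofReal_le_cond_apply [IsFiniteMeasure μ] {s t : Set Ω} (hs : MeasurableSet s)
    (hs0 : μ s ≠ 0) {a : ℝ} (h : a * μ.real s ≤ μ.real (s ∩ t)) :
    ENNReal.ofReal a ≤ μ[t|s] := by
  rw [cond_apply hs, mul_comm, ← div_eq_mul_inv,
    ENNReal.le_div_iff_mul_le (Or.inl hs0) (Or.inl (measure_ne_top μ s)),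
    ← ofReal_measureReal (measure_ne_top μ s),
    ← ofReal_measureReal (measure_ne_top μ (s ∩ t)),
    ← ENNReal.ofReal_mul' measureReal_nonneg]
  exact ENNReal.ofReal_le_ofReal h

end Measure

theorem stmt2_general {Ω : Type*} [MeasurableSpace Ω] (μ : Measure Ω) [IsProbabilityMeasure μ]
    {I : Type*} [Fintype I] {C : Type*} [Fintype C] [DecidableEq C]
    (S : I → Finset C) (k : ℕ) (hk : 1 ≤ k)
    (p : I → ℝ) (hp01 : ∀ i, p i ∈ Set.Icc (0 : ℝ) 1)
    (X : I → Ω → ℕ) (hmeas : ∀ i, Measurable (X i))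
    (h01 : ∀ i ω, X i ω = 0 ∨ X i ω = 1)
    (hind : iIndepFun X μ)
    (hp : ∀ i, (μ {ω | X i ω = 1}).toReal = p i)
    (hH2 : ∀ e : C, ∑ i ∈ Finset.univ.filter (fun i => e ∈ S i), p i ≤ 1 / 6)
    (U : Ω → Finset C)
    (hU : ∀ ω, U ω = Finset.univ.biUnion fun i => if X i ω = 1 then S i else ∅)
    (Z : Ω → ℝ)
    (hZ : ∀ ω, Z ω = (1 / (k : ℝ)) * ∑ i, (X i ω : ℝ) * min ((S i).card : ℝ) (k : ℝ))
    (K : Set Ω) (hK : K = {ω | (U ω).card ≤ k - 1})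
    (hpos : 0 < μ K) :
    (2 : ENNReal) / 5 ≤ (μ[|K]) {ω | Z ω < 2} := by
  classical
  set Y : Ω → I → Bool := fun ω i => decide (X i ω = 1)
  set KA := univ.filter fun f => #(coveredSet S f) ≤ k - 1
  have hY : ∀ i, Measurable fun ω => decide (X i ω = 1) := fun i =>
    (measurable_from_nat (f := fun n => decide (n = 1))).comp (hmeas i)
  have hlaw := measureReal_preimage_eq_sum_bernoulliWeight (μ := μ) hY
    (hind.comp (fun _ n => decide (n = 1)) fun _ => measurable_from_nat) (p := p)
    fun i => by simpa [measureReal_def] using hp i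
  have hKY : K = Y ⁻¹' KA := by
    ext ω
    rw [hK, Set.mem_preimage, mem_coe, mem_filter, Set.mem_ofPred_eq, hU]
    simp [coveredSet, Y]
  have hKZ : K ∩ {ω | Z ω < 2} = Y ⁻¹' (KA.filter fun f => coverCount S f < 2 * k) := by
    ext ω
    by_cases hω : Y ω ∈ KA
    · have hk0 : (0 : ℝ) < k := by exact_mod_cast hk
      have hZω : Z ω = coverCount S (Y ω) / k := by
        rw [hZ, sum_mul_min_card_eq_coverCount (h01 · ω)
          ((mem_filter.1 hω).2.trans (Nat.sub_le k 1)), one_div_mul_eq_div]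
      simp only [hKY, Set.mem_inter_iff, Set.mem_preimage, mem_coe, hω, Set.mem_ofPred_eq, hZω,
        mem_filter, true_and, div_lt_iff₀ hk0]
      norm_cast
    · simp [hKY, hω]
  rw [show (2 : ENNReal) / 5 = ENNReal.ofReal (2 / 5) by
    rw [ENNReal.ofReal_div_of_pos (by norm_num)]; simp]
  refine ofReal_le_cond_apply (hKY ▸ measurable_pi_lambda Y hY (Set.toFinite _).measurableSet)
    hpos.ne' ?_
  rw [hKZ, hKY, hlaw, hlaw]
  exact two_fifths_mul_sum_bernoulliWeight_le_coverCount_lt S hp01 hH2 hk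

/-- Independent `{0,1}` random variables `X i` select sets `S i ⊆ C`; `U` is the random
covered set. Assuming `∑ i, p i * min |S i| k ≥ 6 k` and that every element is
fractionally covered to extent at most `1/6`, conditioned on the event `K` that at most
`k - 1` elements are covered, `Z = (1/k) ∑ i, X i * min |S i| k` is smaller than `2`
with probability at least `2/5`. -/
theorem stmt2 {Ω : Type*} [MeasurableSpace Ω] (μ : Measure Ω) [IsProbabilityMeasure μ]
    {I : Type*} [Fintype I] {C : Type*} [Fintype C] [DecidableEq C]
    (S : I → Finset C) (k : ℕ) (hk : 1 ≤ k)
    (p : I → ℝ) (hp01 : ∀ i, p i ∈ Set.Icc (0 : ℝ) 1)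
    (X : I → Ω → ℕ) (hmeas : ∀ i, Measurable (X i))
    (h01 : ∀ i ω, X i ω = 0 ∨ X i ω = 1)
    (hind : iIndepFun X μ)
    (hp : ∀ i, (μ {ω | X i ω = 1}).toReal = p i)
    (hH1 : (6 * k : ℝ) ≤ ∑ i, p i * min ((S i).card : ℝ) (k : ℝ))
    (hH2 : ∀ e : C, ∑ i ∈ Finset.univ.filter (fun i => e ∈ S i), p i ≤ 1 / 6)
    (U : Ω → Finset C)
    (hU : ∀ ω, U ω = Finset.univ.biUnion fun i => if X i ω = 1 then S i else ∅)
    (Z : Ω → ℝ)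
    (hZ : ∀ ω, Z ω = (1 / (k : ℝ)) * ∑ i, (X i ω : ℝ) * min ((S i).card : ℝ) (k : ℝ))
    (K : Set Ω) (hK : K = {ω | (U ω).card ≤ k - 1})
    (hpos : 0 < μ K) :
    (2 : ENNReal) / 5 ≤ (μ[|K]) {ω | Z ω < 2} :=
  stmt2_general μ S k hk p hp01 X hmeas h01 hind hp hH2 U hU Z hZ K hK hpos
end

section
/- Let I be a finite index set and C a finite set; for each i ∈ I let S_i ⊆ C. Let k ≥ 1 be an integer and let p_i ∈ [0,1] for i ∈ I. On a probability space, let (X_i)_{i∈I} be independent random variables taking values in {0,1} with P(X_i = 1) = p_i, and write U = ⋃_{i : X_i = 1} S_i. Assume that |S_i| ≤ k for every i ∈ I, that E[|U|] ≥ 6k, and that for every e ∈ C, ∑_{i : e ∈ S_i} p_i ≤ 1/6. Then P(|U| ≥ k) ≥ 1/16. -/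
/-!
Let `Z = |U|` and `m = 𝔼 Z`. An element `e` is covered exactly on the union of the independent
events `{X i = 1}` with `e ∈ S i`; as the `p i` summed over these `i` add up to at most `1/6`,
the union has probability `q e ≥ (6/7) ∑_{e ∈ S i} p i`. Two elements `e, f` are covered together
with probability at most `∑_{e, f ∈ S i} p i + q e * q f`, since after splitting off the common
indices the remaining two unions are independent. Summing over `e, f` and using `|S i| ≤ k` gives
`𝔼 Z² ≤ (7/6) k m + m²`.

With `T = {Z ≥ k}` one has `𝔼[Z 1_T] ≥ m - k` and `2 m Z 1_T ≤ Z² + m² 1_T`, hence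
`2 m (m - k) ≤ 𝔼 Z² + m² P(T)`, i.e. `P(T) ≥ 1 - (19/6) k / m ≥ 17/36` because `m ≥ 6 k`.
-/

open MeasureTheory ProbabilityTheory Finset

theorem Finset.prod_one_sub_le_inv_one_add_sum {ι : Type*} (s : Finset ι) {p : ι → ℝ}
    (hp : ∀ i ∈ s, p i ∈ Set.Icc (0 : ℝ) 1) :
    ∏ i ∈ s, (1 - p i) ≤ (1 + ∑ i ∈ s, p i)⁻¹ := by
  have hsum : 0 ≤ ∑ i ∈ s, p i := sum_nonneg fun i hi => (hp i hi).1
  calc ∏ i ∈ s, (1 - p i) ≤ ∏ i ∈ s, Real.exp (-p i) :=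
        prod_le_prod (fun i hi => sub_nonneg.2 (hp i hi).2)
          fun i _ => by linarith [Real.add_one_le_exp (-p i)]
    _ = (Real.exp (∑ i ∈ s, p i))⁻¹ := by rw [← Real.exp_neg, ← sum_neg_distrib, Real.exp_sum]
    _ ≤ (1 + ∑ i ∈ s, p i)⁻¹ :=
        inv_anti₀ (by positivity) (by linarith [Real.add_one_le_exp (∑ i ∈ s, p i)])

theorem Finset.sum_sum_filter_mem_eq_sum_card_smul {ι C M : Type*} [Fintype C] [DecidableEq C]
    [AddCommMonoid M] (S : ι → Finset C) (s : Finset ι) (w : ι → M) :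
    ∑ e, ∑ i ∈ s with e ∈ S i, w i = ∑ i ∈ s, (S i).card • w i := by
  rw [sum_comm' (t' := s) (s' := S) (by simp [and_comm])]
  simp only [sum_const]

theorem Finset.sum_sum_sum_inter_le {ι C : Type*} [Fintype ι] [DecidableEq ι] [Fintype C]
    [DecidableEq C] (S : ι → Finset C) {k : ℕ} (hS : ∀ i, (S i).card ≤ k) {w : ι → ℝ}
    (hw : 0 ≤ w) :
    ∑ e, ∑ f, ∑ i ∈ (univ.filter fun i => e ∈ S i) ∩ univ.filter fun i => f ∈ S i, w i ≤
      k * ∑ e, ∑ i ∈ univ.filter fun i => e ∈ S i, w i := by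
  rw [mul_sum]
  refine sum_le_sum fun e _ => ?_
  simp only [inter_filter, inter_univ, sum_sum_filter_mem_eq_sum_card_smul, nsmul_eq_mul,
    mul_sum]
  exact sum_le_sum fun i _ => mul_le_mul_of_nonneg_right (by exact_mod_cast hS i) (hw i)

theorem Finset.natCast_card_eq_sum_indicator {Ω C : Type*} [Fintype C] (U : Ω → Finset C)
    (ω : Ω) :
    ((U ω).card : ℝ) = ∑ e, {ω | e ∈ U ω}.indicator 1 ω := by
  simp [Set.indicator]

theorem Finset.natCast_card_sq_eq_sum_indicator {Ω C : Type*} [Fintype C] (U : Ω → Finset C)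
    (ω : Ω) :
    ((U ω).card : ℝ) ^ 2 = ∑ e, ∑ f, ({ω | e ∈ U ω} ∩ {ω | f ∈ U ω}).indicator 1 ω := by
  simp only [natCast_card_eq_sum_indicator U ω, sq, sum_mul_sum, Set.inter_indicator_one,
    Pi.mul_apply]

def coverEvent {Ω ι C : Type*} [Fintype ι] [DecidableEq C] (E : ι → Set Ω) (S : ι → Finset C)
    (e : C) : Set Ω :=
  ⋃ i ∈ univ.filter fun i => e ∈ S i, E i

namespace ProbabilityTheory

variable {Ω ι : Type*} [MeasurableSpace Ω] {μ : Measure Ω}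

theorem iIndepFun.iIndepSet_preimage {β : Type*} [MeasurableSpace β] {X : ι → Ω → β}
    (h : iIndepFun X μ) (hX : ∀ i, Measurable (X i)) {B : Set β} (hB : MeasurableSet B) :
    iIndepSet (fun i => X i ⁻¹' B) μ :=
  (iIndepSet_iff_meas_biInter fun i => hX i hB).2 fun _ =>
    h.meas_biInter fun _ _ => ⟨B, hB, rfl⟩

variable [IsProbabilityMeasure μ] {E : ι → Set Ω}

theorem iIndepSet.measureReal_biUnion (h : iIndepSet E μ) (hE : ∀ i, MeasurableSet (E i))
    (F : Finset ι) : μ.real (⋃ i ∈ F, E i) = 1 - ∏ i ∈ F, (1 - μ.real (E i)) := by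
  have hcompl : μ.real (⋂ i ∈ F, (E i)ᶜ) = ∏ i ∈ F, μ.real (E i)ᶜ := by
    simp only [measureReal_def, ← ENNReal.toReal_prod]
    rw [((iIndepSet_iff_iIndep _ _).1 h).meas_biInter fun i _ =>
      (MeasurableSpace.measurableSet_generateFrom (Set.mem_singleton _)).compl]
  rw [← compl_compl (⋃ i ∈ F, E i), probReal_compl_eq_one_sub
    (F.measurableSet_biUnion fun i _ => hE i).compl, Set.compl_iUnion₂, hcompl]
  simp only [probReal_compl_eq_one_sub (hE _)]

theorem iIndepSet.sum_le_one_add_sum_mul_measureReal_biUnion (h : iIndepSet E μ)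
    (hE : ∀ i, MeasurableSet (E i)) (F : Finset ι) :
    ∑ i ∈ F, μ.real (E i) ≤ (1 + ∑ i ∈ F, μ.real (E i)) * μ.real (⋃ i ∈ F, E i) := by
  have hprod := F.prod_one_sub_le_inv_one_add_sum (p := fun i => μ.real (E i))
    fun i _ => ⟨measureReal_nonneg, measureReal_le_one⟩
  have hpos : 0 < 1 + ∑ i ∈ F, μ.real (E i) := by positivity
  rw [h.measureReal_biUnion hE, mul_sub, mul_one]
  have := mul_le_mul_of_nonneg_left hprod hpos.le
  rw [mul_inv_cancel₀ hpos.ne'] at this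
  linarith

theorem iIndepSet.measureReal_biUnion_inter_biUnion_le [DecidableEq ι] (h : iIndepSet E μ)
    (hE : ∀ i, MeasurableSet (E i)) (F G : Finset ι) :
    μ.real ((⋃ i ∈ F, E i) ∩ ⋃ i ∈ G, E i) ≤
      ∑ i ∈ F ∩ G, μ.real (E i) + μ.real (⋃ i ∈ F, E i) * μ.real (⋃ i ∈ G, E i) := by
  have hsub : (⋃ i ∈ F, E i) ∩ (⋃ i ∈ G, E i) ⊆
      (⋃ i ∈ F ∩ G, E i) ∪ ((⋃ i ∈ F \ G, E i) ∩ ⋃ i ∈ G \ F, E i) := by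
    intro ω
    simp only [Set.mem_inter_iff, Set.mem_union, Set.mem_iUnion]
    grind
  have hindep : μ.real ((⋃ i ∈ F \ G, E i) ∩ ⋃ i ∈ G \ F, E i) =
      μ.real (⋃ i ∈ F \ G, E i) * μ.real (⋃ i ∈ G \ F, E i) := by
    have := h.indep_generateFrom_of_disjoint hE ↑(F \ G) ↑(G \ F)
      (by simpa using disjoint_sdiff_sdiff)
    simp only [measureReal_def, ← ENNReal.toReal_mul]
    rw [(Indep_iff _ _ _).1 this _ _
      ((F \ G).measurableSet_biUnion fun i hi => MeasurableSpace.measurableSet_generateFrom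
        ⟨i, hi, rfl⟩)
      ((G \ F).measurableSet_biUnion fun i hi => MeasurableSpace.measurableSet_generateFrom
        ⟨i, hi, rfl⟩)]
  have hmono {H K : Finset ι} (hHK : H ⊆ K) : μ.real (⋃ i ∈ H, E i) ≤ μ.real (⋃ i ∈ K, E i) :=
    measureReal_mono (Set.biUnion_subset_biUnion_left (by exact_mod_cast hHK))
      (measure_ne_top μ _)
  calc μ.real ((⋃ i ∈ F, E i) ∩ ⋃ i ∈ G, E i)
      ≤ μ.real (⋃ i ∈ F ∩ G, E i) + μ.real ((⋃ i ∈ F \ G, E i) ∩ ⋃ i ∈ G \ F, E i) :=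
        (measureReal_mono hsub).trans (measureReal_union_le _ _)
    _ ≤ ∑ i ∈ F ∩ G, μ.real (E i) + μ.real (⋃ i ∈ F, E i) * μ.real (⋃ i ∈ G, E i) := by
        rw [hindep]
        exact add_le_add (measureReal_biUnion_finset_le _ _) (mul_le_mul (hmono sdiff_subset)
          (hmono sdiff_subset) measureReal_nonneg measureReal_nonneg)

theorem two_mul_integral_mul_integral_sub_le {Z : Ω → ℝ} (hZm : Measurable Z) (hZ0 : 0 ≤ Z)
    (hZ : Integrable Z μ) (hZ2 : Integrable (fun ω => Z ω ^ 2) μ) {t : ℝ} (ht : 0 ≤ t) :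
    2 * (∫ ω, Z ω ∂μ) * ((∫ ω, Z ω ∂μ) - t) ≤
      ∫ ω, Z ω ^ 2 ∂μ + (∫ ω, Z ω ∂μ) ^ 2 * μ.real {ω | t ≤ Z ω} := by
  set m := ∫ ω, Z ω ∂μ
  set T := {ω | t ≤ Z ω}
  have hT : MeasurableSet T := measurableSet_le measurable_const hZm
  have hZT : Integrable (T.indicator Z) μ := hZ.indicator hT
  have hcut : m - t ≤ ∫ ω, T.indicator Z ω ∂μ := by
    have : m ≤ ∫ ω, (T.indicator Z ω + t) ∂μ := integral_mono hZ (hZT.add (integrable_const t))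
      fun ω => by
        by_cases hω : ω ∈ T
        · simp [hω, ht]
        · simpa [hω] using (not_le.1 hω).le
    rw [integral_add hZT (integrable_const t), integral_const, probReal_univ, one_smul] at this
    linarith
  have hamgm : 2 * m * ∫ ω, T.indicator Z ω ∂μ ≤ ∫ ω, Z ω ^ 2 ∂μ + m ^ 2 * μ.real T := by
    have hT1 : Integrable (fun ω => m ^ 2 * T.indicator 1 ω) μ :=
      ((integrable_const 1).indicator hT).const_mul _
    calc 2 * m * ∫ ω, T.indicator Z ω ∂μ = ∫ ω, 2 * m * T.indicator Z ω ∂μ :=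
          (integral_const_mul _ _).symm
      _ ≤ ∫ ω, (Z ω ^ 2 + m ^ 2 * T.indicator 1 ω) ∂μ :=
          integral_mono (hZT.const_mul _) (hZ2.add hT1) fun ω => ?_
      _ = ∫ ω, Z ω ^ 2 ∂μ + m ^ 2 * μ.real T := by
          rw [integral_add hZ2 hT1, integral_const_mul, integral_indicator_one hT]
    by_cases hω : ω ∈ T
    · simp only [Set.indicator_of_mem hω, Pi.one_apply]
      nlinarith [sq_nonneg (Z ω - m)]
    · simp only [Set.indicator_of_notMem hω, mul_zero, add_zero]
      positivity
  have hm : 0 ≤ m := integral_nonneg hZ0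
  nlinarith [mul_le_mul_of_nonneg_left hcut (by positivity : 0 ≤ 2 * m)]

variable {C : Type*} [Fintype C]

section RandomFinset

variable {U : Ω → Finset C} (hU : ∀ e, MeasurableSet {ω | e ∈ U ω})
include hU

theorem measurable_card : Measurable fun ω => ((U ω).card : ℝ) := by
  simp only [natCast_card_eq_sum_indicator U]
  exact Finset.measurable_sum _ fun e _ => measurable_const.indicator (hU e)

theorem integrable_card : Integrable (fun ω => ((U ω).card : ℝ)) μ := by
  simp only [natCast_card_eq_sum_indicator U]
  exact integrable_finsetSum _ fun e _ => (integrable_const 1).indicator (hU e)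

theorem integrable_card_sq : Integrable (fun ω => ((U ω).card : ℝ) ^ 2) μ := by
  simp only [natCast_card_sq_eq_sum_indicator U]
  exact integrable_finsetSum _ fun e _ => integrable_finsetSum _ fun f _ =>
    (integrable_const 1).indicator ((hU e).inter (hU f))

theorem integral_card : ∫ ω, ((U ω).card : ℝ) ∂μ = ∑ e, μ.real {ω | e ∈ U ω} := by
  simp only [natCast_card_eq_sum_indicator U]
  rw [integral_finsetSum _ fun e _ => (integrable_const 1).indicator (hU e)]
  simp only [integral_indicator_one (hU _)]

theorem integral_card_sq :
    ∫ ω, ((U ω).card : ℝ) ^ 2 ∂μ = ∑ e, ∑ f, μ.real ({ω | e ∈ U ω} ∩ {ω | f ∈ U ω}) := by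
  simp only [natCast_card_sq_eq_sum_indicator U]
  rw [integral_finsetSum _ fun e _ => integrable_finsetSum _ fun f _ =>
    (integrable_const 1).indicator ((hU e).inter (hU f))]
  refine sum_congr rfl fun e _ => ?_
  rw [integral_finsetSum _ fun f _ => (integrable_const 1).indicator ((hU e).inter (hU f))]
  simp only [integral_indicator_one ((hU _).inter (hU _))]

end RandomFinset

theorem iIndepSet.sum_sum_measureReal_coverEvent_inter_le [Fintype ι] [DecidableEq C]
    (h : iIndepSet E μ) (hE : ∀ i, MeasurableSet (E i)) (S : ι → Finset C) {k : ℕ}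
    (hS : ∀ i, (S i).card ≤ k) {c : ℝ}
    (hc : ∀ e, ∑ i ∈ univ.filter (fun i => e ∈ S i), μ.real (E i) ≤ c) :
    ∑ e, ∑ f, μ.real (coverEvent E S e ∩ coverEvent E S f) ≤
      k * ((1 + c) * ∑ e, μ.real (coverEvent E S e)) + (∑ e, μ.real (coverEvent E S e)) ^ 2 := by
  classical
  have hcover e : ∑ i ∈ univ.filter (fun i => e ∈ S i), μ.real (E i) ≤
      (1 + c) * μ.real (coverEvent E S e) := by
    refine (h.sum_le_one_add_sum_mul_measureReal_biUnion hE _).trans ?_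
    exact mul_le_mul_of_nonneg_right (add_le_add_right (hc e) 1) measureReal_nonneg
  calc ∑ e, ∑ f, μ.real (coverEvent E S e ∩ coverEvent E S f)
      ≤ ∑ e, ∑ f, (∑ i ∈ (univ.filter fun i => e ∈ S i) ∩ univ.filter fun i => f ∈ S i,
          μ.real (E i) + μ.real (coverEvent E S e) * μ.real (coverEvent E S f)) :=
        sum_le_sum fun e _ => sum_le_sum fun f _ =>
          h.measureReal_biUnion_inter_biUnion_le hE _ _
    _ ≤ k * ∑ e, ∑ i ∈ univ.filter (fun i => e ∈ S i), μ.real (E i) +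
          (∑ e, μ.real (coverEvent E S e)) ^ 2 := by
        simp only [sum_add_distrib, ← sum_mul_sum, ← sq]
        gcongr
        exact sum_sum_sum_inter_le S hS fun i => measureReal_nonneg
    _ ≤ k * ((1 + c) * ∑ e, μ.real (coverEvent E S e)) +
          (∑ e, μ.real (coverEvent E S e)) ^ 2 := by
        gcongr
        rw [mul_sum]
        exact sum_le_sum fun e _ => hcover e

end ProbabilityTheory

theorem stmt4_general {Ω : Type*} [MeasurableSpace Ω] (μ : Measure Ω) [IsProbabilityMeasure μ]
    {I : Type*} [Fintype I] {C : Type*} [Fintype C] [DecidableEq C]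
    (S : I → Finset C) (k : ℕ) (hk : 1 ≤ k)
    (p : I → ℝ)
    (X : I → Ω → ℕ) (hmeas : ∀ i, Measurable (X i))
    (hind : iIndepFun X μ)
    (hp : ∀ i, (μ {ω | X i ω = 1}).toReal = p i)
    (U : Ω → Finset C)
    (hU : ∀ ω, U ω = Finset.univ.biUnion fun i => if X i ω = 1 then S i else ∅)
    (hsmall : ∀ i, (S i).card ≤ k)
    (hexp : (6 * k : ℝ) ≤ ∫ ω, ((U ω).card : ℝ) ∂μ)
    (hH2 : ∀ e : C, ∑ i ∈ Finset.univ.filter (fun i => e ∈ S i), p i ≤ 1 / 6) :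
    (1 : ENNReal) / 16 ≤ μ {ω | k ≤ (U ω).card} := by
  classical
  set E : I → Set Ω := fun i => X i ⁻¹' {1}
  have hE i : MeasurableSet (E i) := hmeas i (measurableSet_singleton 1)
  obtain rfl : p = fun i => μ.real (E i) := funext fun i => (hp i).symm
  have hcover e : {ω | e ∈ U ω} = coverEvent E S e := by
    ext ω
    simp only [hU, mem_biUnion, mem_univ, true_and, Set.mem_ofPred_eq, coverEvent, mem_filter,
      Set.mem_iUnion, Set.mem_preimage, Set.mem_singleton_iff, exists_prop, E]
    grind
  have hmeas_cover e : MeasurableSet {ω | e ∈ U ω} :=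
    hcover e ▸ Finset.measurableSet_biUnion _ fun i _ => hE i
  have hsecond : ∫ ω, ((U ω).card : ℝ) ^ 2 ∂μ ≤
      k * ((1 + 1 / 6) * ∫ ω, ((U ω).card : ℝ) ∂μ) + (∫ ω, ((U ω).card : ℝ) ∂μ) ^ 2 := by
    simp only [integral_card_sq hmeas_cover, integral_card hmeas_cover, hcover]
    exact (hind.iIndepSet_preimage hmeas (measurableSet_singleton 1))
      |>.sum_sum_measureReal_coverEvent_inter_le hE S hsmall hH2
  have htail := two_mul_integral_mul_integral_sub_le (μ := μ) (measurable_card hmeas_cover)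
    (fun ω => Nat.cast_nonneg _) (integrable_card hmeas_cover) (integrable_card_sq hmeas_cover)
    (Nat.cast_nonneg k)
  simp only [Nat.cast_le] at htail
  have hk_real : (1 : ℝ) ≤ k := by exact_mod_cast hk
  have hT : (1 : ℝ) / 16 ≤ μ.real {ω | k ≤ (U ω).card} := by nlinarith
  calc (1 : ENNReal) / 16 = ENNReal.ofReal (1 / 16) := by
        rw [ENNReal.ofReal_div_of_pos (by norm_num)]; simp
    _ ≤ μ {ω | k ≤ (U ω).card} := ENNReal.ofReal_le_of_le_toReal hT

/-- Independent `{0,1}` random variables `X i` select sets `S i ⊆ C` with `|S i| ≤ k`;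
`U` is the random covered set. If the expected number of covered elements is at least
`6 k` and every element is fractionally covered to extent at most `1/6`, then `U` covers
at least `k` elements with probability at least `1/16`. -/
theorem stmt4 {Ω : Type*} [MeasurableSpace Ω] (μ : Measure Ω) [IsProbabilityMeasure μ]
    {I : Type*} [Fintype I] {C : Type*} [Fintype C] [DecidableEq C]
    (S : I → Finset C) (k : ℕ) (hk : 1 ≤ k)
    (p : I → ℝ) (hp01 : ∀ i, p i ∈ Set.Icc (0 : ℝ) 1)
    (X : I → Ω → ℕ) (hmeas : ∀ i, Measurable (X i))
    (h01 : ∀ i ω, X i ω = 0 ∨ X i ω = 1)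
    (hind : iIndepFun X μ)
    (hp : ∀ i, (μ {ω | X i ω = 1}).toReal = p i)
    (U : Ω → Finset C)
    (hU : ∀ ω, U ω = Finset.univ.biUnion fun i => if X i ω = 1 then S i else ∅)
    (hsmall : ∀ i, (S i).card ≤ k)
    (hexp : (6 * k : ℝ) ≤ ∫ ω, ((U ω).card : ℝ) ∂μ)
    (hH2 : ∀ e : C, ∑ i ∈ Finset.univ.filter (fun i => e ∈ S i), p i ≤ 1 / 6) :
    (1 : ENNReal) / 16 ≤ μ {ω | k ≤ (U ω).card} :=
  stmt4_general μ S k hk p X hmeas hind hp U hU hsmall hexp hH2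
end

section
/- Let I be a finite index set and X a finite set; for each i ∈ I let S_i ⊆ X. Let C_1, …, C_r ⊆ X be r color classes with integer requirements k_t ≥ 1, and let p_i ∈ [0,1] for i ∈ I. Assume (H1) for every t ∈ {1,…,r}, ∑_{i∈I} p_i · min(|S_i ∩ C_t|, k_t) ≥ 6·k_t, and (H2) for every e ∈ X, ∑_{i : e ∈ S_i} p_i ≤ 1/6. Let N ≥ 1 and, on a probability space, let (X_i^{(ℓ)})_{i∈I, 1≤ℓ≤N} be mutually independent random variables taking values in {0,1} with P(X_i^{(ℓ)} = 1) = p_i. Let Σ = {i ∈ I : X_i^{(ℓ)} = 1 for some ℓ}. Then P(for every t ∈ {1,…,r}, |(⋃_{i∈Σ} S_i) ∩ C_t| ≥ k_t) ≥ 1 − r·(15/16)^N. -/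
/-!
Fix a colour class `C` with requirement `k` and a single iteration. Shrink each `S i` to a subset
`T i ⊆ S i ∩ C` of size `min (#(S i ∩ C)) k`, and let `Z` be the sum of `#(T i)` over the selected
indices and `W` the sum of `#(T i ∩ T j)` over ordered pairs of distinct selected indices. By the
Bonferroni inequality the selected sets cover at least `Z - W / 2` elements of `C`. By (H1) the
mean `m` of `Z` is at least `6 k`, and since the selections are pairwise independent and
`#(T i) ≤ k`, the variance of `Z` is at most `k m`, so Chebyshev gives
`P(Z ≤ m / 2) ≤ 4 k / m ≤ 2 / 3`. By (H2) the mean of `W` is at most `m / 6`, so Markov gives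
`P(W ≥ 2 m / 3) ≤ 1 / 4`. Outside both events at least `m / 2 - m / 3 ≥ k` elements of `C` are
covered, so one iteration fails for `C` with probability at most `11 / 12 ≤ 15 / 16`. The `N`
iterations are independent, and a union bound over the `r` colour classes finishes the proof.
-/

open Finset MeasureTheory ProbabilityTheory

namespace Finset

variable {ι α : Type*}

theorem two_mul_sum_card_le_two_mul_card_biUnion_add_sum_offDiag [DecidableEq ι] [DecidableEq α]
    (s : Finset ι) (T : ι → Finset α) :
    2 * ∑ i ∈ s, #(T i) ≤ 2 * #(s.biUnion T) + ∑ x ∈ s.offDiag, #(T x.1 ∩ T x.2) := by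
  induction s using Finset.induction_on with
  | empty => simp
  | @insert a s ha ih =>
    have hpairs : ∑ x ∈ (insert a s).offDiag, #(T x.1 ∩ T x.2) =
        ∑ x ∈ s.offDiag, #(T x.1 ∩ T x.2) + 2 * ∑ j ∈ s, #(T a ∩ T j) := by
      rw [offDiag_insert ha, sum_union, sum_union, sum_product, sum_product_right,
        sum_singleton, sum_singleton]
      · simp only [inter_comm (T _) (T a)]
        ring
      all_goals
        simp only [disjoint_left, mem_union, mem_offDiag, mem_product, mem_singleton]
        grind
    have hunion : #(T a) + #(s.biUnion T) = #((insert a s).biUnion T) + #(T a ∩ s.biUnion T) := by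
      rw [biUnion_insert, card_union_add_card_inter]
    have hoverlap : #(T a ∩ s.biUnion T) ≤ ∑ j ∈ s, #(T a ∩ T j) := by
      rw [inter_biUnion]
      exact card_biUnion_le
    rw [sum_insert ha, hpairs]
    omega

theorem sum_offDiag_mul_card_inter_le [DecidableEq α] (s : Finset ι) (T : ι → Finset α)
    {q : ι → ℝ} (hq : ∀ i, 0 ≤ q i) {ε : ℝ} (hε : ∀ e, ∑ i ∈ s with e ∈ T i, q i ≤ ε) :
    ∑ x ∈ s.offDiag, q x.1 * q x.2 * #(T x.1 ∩ T x.2) ≤ ε * ∑ i ∈ s, q i * #(T i) := by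
  have hrow : ∀ i, ∑ j ∈ s, q j * #(T i ∩ T j) ≤ ε * #(T i) := fun i => calc
    ∑ j ∈ s, q j * #(T i ∩ T j) = ∑ e ∈ T i, ∑ j ∈ s with e ∈ T j, q j := by
      simp only [← filter_mem_eq_inter, card_filter, Nat.cast_sum, Nat.cast_ite, Nat.cast_one,
        Nat.cast_zero, mul_sum, mul_ite, mul_one, mul_zero, sum_filter]
      exact sum_comm
    _ ≤ ∑ _e ∈ T i, ε := sum_le_sum fun e _ => hε e
    _ = ε * #(T i) := by rw [sum_const, nsmul_eq_mul, mul_comm]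
  calc ∑ x ∈ s.offDiag, q x.1 * q x.2 * #(T x.1 ∩ T x.2)
      ≤ ∑ x ∈ s ×ˢ s, q x.1 * q x.2 * #(T x.1 ∩ T x.2) :=
        sum_le_sum_of_subset_of_nonneg (fun x hx => by simp_all [mem_offDiag])
          fun x _ _ => by have := hq x.1; have := hq x.2; positivity
    _ = ∑ i ∈ s, q i * ∑ j ∈ s, q j * #(T i ∩ T j) := by
        rw [sum_product]
        simp only [mul_sum, mul_assoc]
    _ ≤ ∑ i ∈ s, q i * (ε * #(T i)) :=
        sum_le_sum fun i _ => mul_le_mul_of_nonneg_left (hrow i) (hq i)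
    _ = ε * ∑ i ∈ s, q i * #(T i) := by
        rw [mul_sum]
        exact sum_congr rfl fun i _ => by ring

theorem sq_sum_eq_sum_sq_add_sum_offDiag [DecidableEq ι] {R : Type*} [CommSemiring R]
    (s : Finset ι) (c : ι → R) :
    (∑ i ∈ s, c i) ^ 2 = ∑ i ∈ s, c i ^ 2 + ∑ x ∈ s.offDiag, c x.1 * c x.2 := by
  rw [sq, sum_mul_sum, ← sum_product', ← diag_union_offDiag, sum_union (disjoint_diag_offDiag _),
    sum_diag]
  simp only [sq]

end Finset

section RandomFinset

variable {Ω β : Type*} [Fintype β] {K : Ω → Finset β}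

theorem sum_mem_eq_sum_indicator (K : Ω → Finset β) (w : β → ℝ) (ω : Ω) :
    ∑ x ∈ K ω, w x = ∑ x, {ω | x ∈ K ω}.indicator (fun _ => w x) ω := by
  classical
  simp only [Set.indicator_apply, Set.mem_ofPred_eq, sum_ite_mem, univ_inter]

variable [MeasurableSpace Ω] {μ : Measure Ω} [IsFiniteMeasure μ]

theorem integrable_sum_mem (hK : ∀ x, MeasurableSet {ω | x ∈ K ω}) (w : β → ℝ) :
    Integrable (fun ω => ∑ x ∈ K ω, w x) μ := by
  simp_rw [sum_mem_eq_sum_indicator K]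
  exact integrable_finsetSum _ fun x _ => (integrable_const _).indicator (hK x)

theorem integral_sum_mem (hK : ∀ x, MeasurableSet {ω | x ∈ K ω}) (w : β → ℝ) :
    ∫ ω, ∑ x ∈ K ω, w x ∂μ = ∑ x, μ.real {ω | x ∈ K ω} * w x := by
  simp_rw [sum_mem_eq_sum_indicator K]
  rw [integral_finsetSum _ fun x _ => (integrable_const _).indicator (hK x)]
  simp only [integral_indicator_const _ (hK _), smul_eq_mul]

end RandomFinset

section PairwiseIndependentSelection

variable {Ω I : Type*} [MeasurableSpace Ω] {μ : Measure Ω} {J : Ω → Finset I}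

theorem measurableSet_mem_offDiag (hJ : ∀ i, MeasurableSet {ω | i ∈ J ω}) (x : I × I) :
    MeasurableSet {ω | x ∈ (J ω).offDiag} := by
  simp only [mem_offDiag, Set.ofPred_and]
  exact (hJ x.1).inter ((hJ x.2).inter (MeasurableSet.const _))

variable [IsProbabilityMeasure μ] [Fintype I] [DecidableEq I]

theorem integral_sum_offDiag (hJ : ∀ i, MeasurableSet {ω | i ∈ J ω})
    (hpair : Pairwise fun i j => IndepSet {ω | i ∈ J ω} {ω | j ∈ J ω} μ) (w : I × I → ℝ) :
    ∫ ω, ∑ x ∈ (J ω).offDiag, w x ∂μ =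
      ∑ x ∈ univ.offDiag, μ.real {ω | x.1 ∈ J ω} * μ.real {ω | x.2 ∈ J ω} * w x := by
  rw [integral_sum_mem (measurableSet_mem_offDiag hJ), ← sum_subset (subset_univ univ.offDiag)]
  · refine sum_congr rfl fun x hx => ?_
    have hne : x.1 ≠ x.2 := (mem_offDiag.1 hx).2.2
    simp only [mem_offDiag, Set.ofPred_and, ne_eq, hne, not_false_eq_true, Set.ofPred_true,
      Set.inter_univ, measureReal_def, (hpair hne).measure_inter_eq_mul, ENNReal.toReal_mul]
  · intro x _ hx
    have heq : x.1 = x.2 := by simpa using hx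
    simp [mem_offDiag, heq]

theorem integrable_sum_mem_sub_sq (hJ : ∀ i, MeasurableSet {ω | i ∈ J ω}) (c : I → ℝ) (a : ℝ) :
    Integrable (fun ω => (∑ i ∈ J ω, c i - a) ^ 2) μ := by
  simp_rw [sub_sq, sq_sum_eq_sum_sq_add_sum_offDiag]
  exact (((integrable_sum_mem hJ _).add (integrable_sum_mem (measurableSet_mem_offDiag hJ) _)).sub
    (((integrable_sum_mem hJ c).const_mul 2).mul_const a)).add (integrable_const _)

theorem integral_sum_mem_sub_sq_le (hJ : ∀ i, MeasurableSet {ω | i ∈ J ω})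
    (hpair : Pairwise fun i j => IndepSet {ω | i ∈ J ω} {ω | j ∈ J ω} μ)
    {c : I → ℝ} {k : ℝ} (hc0 : ∀ i, 0 ≤ c i) (hck : ∀ i, c i ≤ k) :
    ∫ ω, (∑ i ∈ J ω, c i - ∑ i, μ.real {ω | i ∈ J ω} * c i) ^ 2 ∂μ ≤
      k * ∑ i, μ.real {ω | i ∈ J ω} * c i := by
  set q : I → ℝ := fun i => μ.real {ω | i ∈ J ω}
  set m := ∑ i, q i * c i
  have hexpand : ∀ ω, (∑ i ∈ J ω, c i - m) ^ 2 =
      ∑ i ∈ J ω, c i ^ 2 + ∑ x ∈ (J ω).offDiag, c x.1 * c x.2 - 2 * m * ∑ i ∈ J ω, c i + m ^ 2 :=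
    fun ω => by rw [sub_sq, sq_sum_eq_sum_sq_add_sum_offDiag]; ring
  have hmean_sq : m ^ 2 = ∑ i, (q i * c i) ^ 2 +
      ∑ x ∈ univ.offDiag, q x.1 * q x.2 * (c x.1 * c x.2) := by
    rw [sq_sum_eq_sum_sq_add_sum_offDiag]
    exact congrArg _ (sum_congr rfl fun x _ => by ring)
  have hsum := integrable_sum_mem (μ := μ) hJ c
  have hsq_add : Integrable
      (fun ω => ∑ i ∈ J ω, c i ^ 2 + ∑ x ∈ (J ω).offDiag, c x.1 * c x.2) μ :=
    (integrable_sum_mem hJ _).add (integrable_sum_mem (measurableSet_mem_offDiag hJ) _)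
  have hsq_add_sub : Integrable (fun ω =>
      ∑ i ∈ J ω, c i ^ 2 + ∑ x ∈ (J ω).offDiag, c x.1 * c x.2 - 2 * m * ∑ i ∈ J ω, c i) μ :=
    hsq_add.sub (hsum.const_mul _)
  simp_rw [hexpand]
  rw [integral_add hsq_add_sub (integrable_const _), integral_sub hsq_add (hsum.const_mul _),
    integral_add (integrable_sum_mem hJ _) (integrable_sum_mem (measurableSet_mem_offDiag hJ) _),
    integral_const_mul, integral_sum_mem hJ, integral_sum_mem hJ, integral_sum_offDiag hJ hpair,
    integral_const, probReal_univ, one_smul]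
  have hvar : ∑ i, q i * c i ^ 2 ≤ k * m := by
    rw [mul_sum]
    exact sum_le_sum fun i _ => by
      have hq : 0 ≤ q i := measureReal_nonneg
      nlinarith [mul_nonneg (mul_nonneg hq (hc0 i)) (sub_nonneg.2 (hck i))]
  have : 0 ≤ ∑ i, (q i * c i) ^ 2 := sum_nonneg fun i _ => sq_nonneg _
  linarith

theorem measureReal_card_biUnion_lt_le {α : Type*} [DecidableEq α]
    (hJ : ∀ i, MeasurableSet {ω | i ∈ J ω})
    (hpair : Pairwise fun i j => IndepSet {ω | i ∈ J ω} {ω | j ∈ J ω} μ)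
    (T : I → Finset α) {k : ℕ} (hk : 0 < k) (hTk : ∀ i, #(T i) ≤ k)
    (hmean : (6 * k : ℝ) ≤ ∑ i, μ.real {ω | i ∈ J ω} * #(T i))
    (hlight : ∀ e, ∑ i with e ∈ T i, μ.real {ω | i ∈ J ω} ≤ 1 / 6) :
    μ.real {ω | #((J ω).biUnion T) < k} ≤ 11 / 12 := by
  set m := ∑ i, μ.real {ω | i ∈ J ω} * #(T i)
  set size : Ω → ℝ := fun ω => ∑ i ∈ J ω, (#(T i) : ℝ)
  set overlap : Ω → ℝ := fun ω => ∑ x ∈ (J ω).offDiag, (#(T x.1 ∩ T x.2) : ℝ)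
  have hm : 0 < m := by
    have : (0 : ℝ) < k := by exact_mod_cast hk
    linarith
  have hsize : μ.real {ω | m ^ 2 / 4 ≤ (size ω - m) ^ 2} ≤ 2 / 3 := by
    have hvar : ∫ ω, (size ω - m) ^ 2 ∂μ ≤ k * m :=
      integral_sum_mem_sub_sq_le hJ hpair (fun i => Nat.cast_nonneg _)
        (fun i => Nat.cast_le.2 (hTk i))
    have hchebyshev := mul_meas_ge_le_integral_of_nonneg
      (Filter.Eventually.of_forall fun ω => sq_nonneg (size ω - m))
      (integrable_sum_mem_sub_sq (μ := μ) hJ (fun i => (#(T i) : ℝ)) m) (m ^ 2 / 4)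
    have : (k : ℝ) * m ≤ m ^ 2 / 6 := by nlinarith
    nlinarith [sq_pos_of_pos hm]
  have hoverlap : μ.real {ω | 2 * m / 3 ≤ overlap ω} ≤ 1 / 4 := by
    have hmarkov := mul_meas_ge_le_integral_of_nonneg (f := overlap)
      (Filter.Eventually.of_forall fun ω => sum_nonneg fun x _ => Nat.cast_nonneg _)
      (integrable_sum_mem (μ := μ) (measurableSet_mem_offDiag hJ) _) (2 * m / 3)
    rw [integral_sum_offDiag hJ hpair] at hmarkov
    have := sum_offDiag_mul_card_inter_le univ T (fun i => measureReal_nonneg) hlight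
    have : 0 ≤ μ.real {ω | 2 * m / 3 ≤ overlap ω} := measureReal_nonneg
    nlinarith
  have hbad : {ω | #((J ω).biUnion T) < k} ⊆
      {ω | m ^ 2 / 4 ≤ (size ω - m) ^ 2} ∪ {ω | 2 * m / 3 ≤ overlap ω} := by
    intro ω hω
    by_contra hgood
    simp only [Set.mem_union, Set.mem_ofPred_eq, not_or, not_le] at hω hgood
    have hbonferroni : 2 * size ω ≤ 2 * #((J ω).biUnion T) + overlap ω := by
      simp only [size, overlap]
      exact_mod_cast two_mul_sum_card_le_two_mul_card_biUnion_add_sum_offDiag (J ω) T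
    have : m / 2 < size ω := by nlinarith
    have : (#((J ω).biUnion T) : ℝ) < k := by exact_mod_cast hω
    linarith
  calc μ.real {ω | #((J ω).biUnion T) < k}
      ≤ μ.real {ω | m ^ 2 / 4 ≤ (size ω - m) ^ 2} + μ.real {ω | 2 * m / 3 ≤ overlap ω} :=
        (measureReal_mono hbad).trans (measureReal_union_le _ _)
    _ ≤ 11 / 12 := by linarith

end PairwiseIndependentSelection

theorem measureReal_card_biUnion_inter_lt_le {Ω I α : Type*} [MeasurableSpace Ω]
    {μ : Measure Ω} [IsProbabilityMeasure μ] [Fintype I] [DecidableEq α]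
    (Y : I → Ω → ℕ) (hY : ∀ i, Measurable (Y i))
    (hindep : Pairwise fun i j => IndepFun (Y i) (Y j) μ) {p : I → ℝ}
    (hp : ∀ i, μ.real {ω | Y i ω = 1} = p i) (S : I → Finset α) (C : Finset α) {k : ℕ} (hk : 1 ≤ k)
    (hmean : (6 * k : ℝ) ≤ ∑ i, p i * min (#(S i ∩ C) : ℝ) (k : ℝ))
    (hlight : ∀ e, ∑ i with e ∈ S i, p i ≤ 1 / 6) :
    μ.real {ω | #(({i | Y i ω = 1} : Finset I).biUnion S ∩ C) < k} ≤ 11 / 12 := by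
  classical
  have hevent : ∀ i, {ω | i ∈ ({i | Y i ω = 1} : Finset I)} = {ω | Y i ω = 1} := fun i => by
    ext ω
    simp
  have hpair : Pairwise fun i j => IndepSet {ω | i ∈ ({i | Y i ω = 1} : Finset I)}
      {ω | j ∈ ({i | Y i ω = 1} : Finset I)} μ := fun i j hij => by
    dsimp only
    rw [hevent, hevent]
    exact ((IndepFun_iff_Indep _ _ _).1 (hindep hij)).indepSet_of_measurableSet
      ⟨{1}, measurableSet_singleton 1, rfl⟩ ⟨{1}, measurableSet_singleton 1, rfl⟩
  choose T hTS hTcard using fun i => exists_subset_card_eq (min_le_left #(S i ∩ C) k)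
  have hlightT : ∀ e, ∑ i with e ∈ T i, p i ≤ 1 / 6 := fun e =>
    (sum_le_sum_of_subset_of_nonneg
      (monotone_filter_right _ fun i _ he => (mem_inter.1 (hTS i he)).1)
      fun i _ _ => hp i ▸ measureReal_nonneg).trans (hlight e)
  refine (measureReal_mono fun ω hω => ?_).trans (measureReal_card_biUnion_lt_le
    (fun i => hevent i ▸ hY i (measurableSet_singleton 1)) hpair T hk
    (fun i => (hTcard i).trans_le (min_le_right _ _)) ?_ ?_)
  · refine (card_le_card (biUnion_subset.2 fun i hi => (hTS i).trans ?_)).trans_lt hω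
    exact inter_subset_inter_right (subset_biUnion_of_mem S hi)
  · simpa only [hevent, hp, hTcard, Nat.cast_min] using hmean
  · simpa only [hevent, hp] using hlightT

theorem ProbabilityTheory.iIndepFun.iIndepFun_curry_snd {Ω ι κ β : Type*} [MeasurableSpace Ω]
    {μ : Measure Ω} [Fintype ι] [MeasurableSpace β] {X : ι × κ → Ω → β}
    (hX : ∀ p, Measurable (X p)) (h : iIndepFun X μ) :
    iIndepFun (fun j ω i => X (i, j) ω) μ := by
  classical
  have := h.isProbabilityMeasure
  refine iIndepFun_iff_measure_inter_preimage_eq_mul.2 fun s => ?_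
  induction s using Finset.induction_on with
  | empty => simp
  | @insert a s ha ih =>
    intro A hA
    rw [set_biInter_insert, prod_insert ha, ← ih fun j hj => hA j (mem_insert_of_mem hj)]
    have hdisj : Disjoint (univ ×ˢ {a} : Finset (ι × κ)) (univ ×ˢ s) := by
      simp only [disjoint_left, mem_product, mem_univ, mem_singleton, true_and]
      rintro _ rfl
      exact ha
    have hcol : ∀ i, (i, a) ∈ (univ ×ˢ {a} : Finset (ι × κ)) := by simp
    have hcols : ∀ i j, j ∈ s → (i, j) ∈ (univ ×ˢ s : Finset (ι × κ)) := by simp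
    have hcol_meas : MeasurableSet {v : (univ ×ˢ {a} : Finset (ι × κ)) → β |
        (fun i => v ⟨(i, a), hcol i⟩) ∈ A a} :=
      measurable_pi_lambda _ (fun i => measurable_pi_apply _) (hA a (mem_insert_self a s))
    have hcols_meas : MeasurableSet {v : (univ ×ˢ s : Finset (ι × κ)) → β |
        ∀ j : s, (fun i => v ⟨(i, j), hcols i j j.2⟩) ∈ A j} := by
      simp only [Set.ofPred_forall]
      exact MeasurableSet.iInter fun j =>
        measurable_pi_lambda _ (fun i => measurable_pi_apply _) (hA j (mem_insert_of_mem j.2))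
    convert (h.indepFun_finset _ _ hdisj hX).measure_inter_preimage_eq_mul _ _ hcol_meas hcols_meas
      using 3 <;> ext ω <;> simp

theorem ProbabilityTheory.iIndepFun.measureReal_iInter_preimage_le_pow {Ω ι κ β : Type*}
    [MeasurableSpace Ω] {μ : Measure Ω} [Fintype ι] [Fintype κ] [MeasurableSpace β]
    {X : ι × κ → Ω → β} (hX : ∀ p, Measurable (X p)) (h : iIndepFun X μ) {M : Set (ι → β)}
    (hM : MeasurableSet M) {ε : ℝ} (hε : ∀ j, μ.real {ω | (fun i => X (i, j) ω) ∈ M} ≤ ε) :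
    μ.real (⋂ j, {ω | (fun i => X (i, j) ω) ∈ M}) ≤ ε ^ Fintype.card κ := by
  rw [measureReal_def, (h.iIndepFun_curry_snd hX).meas_iInter
    (s := fun j => {ω | (fun i => X (i, j) ω) ∈ M}) fun j => ⟨M, hM, rfl⟩,
    ENNReal.toReal_prod, ← card_univ, ← prod_const]
  exact prod_le_prod (fun _ _ => measureReal_nonneg) fun j _ => hε j

theorem stmt5_general {Ω : Type*} [MeasurableSpace Ω] (μ : Measure Ω) [IsProbabilityMeasure μ]
    {I : Type*} [Fintype I] {α : Type*} [DecidableEq α]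
    (S : I → Finset α) (r : ℕ) (C : Fin r → Finset α)
    (k : Fin r → ℕ) (hk : ∀ t, 1 ≤ k t)
    (p : I → ℝ)
    (hH1 : ∀ t, (6 * k t : ℝ) ≤ ∑ i, p i * min ((S i ∩ C t).card : ℝ) (k t : ℝ))
    (hH2 : ∀ e : α, ∑ i ∈ Finset.univ.filter (fun i => e ∈ S i), p i ≤ 1 / 6)
    (N : ℕ)
    (X : I × Fin N → Ω → ℕ) (hmeas : ∀ iℓ, Measurable (X iℓ))
    (hind : iIndepFun X μ)
    (hp : ∀ iℓ, (μ {ω | X iℓ ω = 1}).toReal = p iℓ.1)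
    (U : Ω → Finset α)
    (hU : ∀ ω, U ω = Finset.univ.biUnion fun i =>
      if ∃ ℓ : Fin N, X (i, ℓ) ω = 1 then S i else ∅) :
    (1 : ℝ) - r * (15 / 16 : ℝ) ^ N ≤
      (μ {ω | ∀ t, k t ≤ ((U ω) ∩ C t).card}).toReal := by
  classical
  set good := {ω | ∀ t, k t ≤ #(U ω ∩ C t)}
  set fails : Fin r → Set (I → ℕ) := fun t =>
    {v | #(({i | v i = 1} : Finset I).biUnion S ∩ C t) < k t}
  have hcolor : ∀ t, μ.real (⋂ ℓ, {ω | (fun i => X (i, ℓ) ω) ∈ fails t}) ≤ (11 / 12) ^ N := by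
    intro t
    simpa using hind.measureReal_iInter_preimage_le_pow hmeas .of_discrete fun ℓ =>
      measureReal_card_biUnion_inter_lt_le (fun i => X (i, ℓ)) (fun i => hmeas _)
        (fun i j hij => hind.indepFun (by simpa using hij)) (fun i => hp (i, ℓ)) S (C t) (hk t)
        (hH1 t) hH2
  have hbad : goodᶜ ⊆ ⋃ t, ⋂ ℓ, {ω | (fun i => X (i, ℓ) ω) ∈ fails t} := by
    intro ω hω
    simp only [good, Set.mem_compl_iff, Set.mem_ofPred_eq, not_forall, not_le] at hω
    obtain ⟨t, ht⟩ := hω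
    refine Set.mem_iUnion.2 ⟨t, Set.mem_iInter.2 fun ℓ => ?_⟩
    refine (card_le_card (inter_subset_inter_right (biUnion_subset.2 fun i hi => ?_))).trans_lt ht
    rw [hU ω]
    refine (subset_biUnion_of_mem _ (mem_univ i)).trans' ?_
    rw [if_pos ⟨ℓ, (mem_filter.1 hi).2⟩]
  have hgood : 1 ≤ μ.real good + μ.real goodᶜ := by
    simpa [Set.union_compl_self] using measureReal_union_le (μ := μ) good goodᶜ
  have hbad_le : μ.real goodᶜ ≤ r * (11 / 12) ^ N :=
    (measureReal_mono hbad).trans <| (measureReal_iUnion_fintype_le _).trans <|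
      (sum_le_sum fun t _ => hcolor t).trans (by simp)
  have : ((11 : ℝ) / 12) ^ N ≤ (15 / 16) ^ N := pow_le_pow_left₀ (by norm_num) (by norm_num) N
  rw [← measureReal_def]
  nlinarith [(r.cast_nonneg : (0 : ℝ) ≤ r)]

/-- `N` independent rounding iterations: in each iteration `ℓ`, each index `i` is picked
independently with probability `p i`; `Σ` is the set of indices picked in some iteration.
Under the strengthened LP constraints (H1) and the lightness condition (H2), with
probability at least `1 - r (15/16)^N`, the union of the selected sets meets the
coverage requirement `k t` of every color class `C t`. -/
theorem stmt5 {Ω : Type*} [MeasurableSpace Ω] (μ : Measure Ω) [IsProbabilityMeasure μ]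
    {I : Type*} [Fintype I] {α : Type*} [Fintype α] [DecidableEq α]
    (S : I → Finset α) (r : ℕ) (C : Fin r → Finset α)
    (k : Fin r → ℕ) (hk : ∀ t, 1 ≤ k t)
    (p : I → ℝ) (hp01 : ∀ i, p i ∈ Set.Icc (0 : ℝ) 1)
    (hH1 : ∀ t, (6 * k t : ℝ) ≤ ∑ i, p i * min ((S i ∩ C t).card : ℝ) (k t : ℝ))
    (hH2 : ∀ e : α, ∑ i ∈ Finset.univ.filter (fun i => e ∈ S i), p i ≤ 1 / 6)
    (N : ℕ) (hN : 1 ≤ N)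
    (X : I × Fin N → Ω → ℕ) (hmeas : ∀ iℓ, Measurable (X iℓ))
    (h01 : ∀ iℓ ω, X iℓ ω = 0 ∨ X iℓ ω = 1)
    (hind : iIndepFun X μ)
    (hp : ∀ iℓ, (μ {ω | X iℓ ω = 1}).toReal = p iℓ.1)
    (U : Ω → Finset α)
    (hU : ∀ ω, U ω = Finset.univ.biUnion fun i =>
      if ∃ ℓ : Fin N, X (i, ℓ) ω = 1 then S i else ∅) :
    (1 : ℝ) - r * (15 / 16 : ℝ) ^ N ≤
      (μ {ω | ∀ t, k t ≤ ((U ω) ∩ C t).card}).toReal :=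
  stmt5_general μ S r C k hk p hH1 hH2 N X hmeas hind hp U hU
end

section
/- Let X be a finite set, R a finite family of subsets of X, C ⊆ X a color class, and k an integer with 1 ≤ k ≤ |C|. Let R' ⊆ R be any subfamily with |(⋃_{S∈R'} S) ∩ C| ≥ k, and let A ⊆ R be arbitrary. Define k(A) = max(0, k − |C ∩ ⋃_{S∈A} S|) and, for a set S ∈ R, deg(S, A) = |S ∩ (C \ ⋃_{T∈A} T)|. Then ∑_{S ∈ R' \ A} min(deg(S, A), k(A)) ≥ k(A). -/
open Finset

lemma min_sum_le {β : Type*} (s : Finset β) (f : β → ℕ) (m : ℕ) :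
    min (∑ i ∈ s, f i) m ≤ ∑ i ∈ s, min (f i) m := by
  induction s using Finset.cons_induction with
  | empty => simp
  | cons a s ha ih =>
    rw [Finset.sum_cons, Finset.sum_cons]
    calc min (f a + ∑ i ∈ s, f i) m ≤ min (f a) m + min (∑ i ∈ s, f i) m := by
          rcases le_total m (f a) with h | h
          · have : min (f a) m = m := min_eq_right h
            omega
          · have : min (f a) m = f a := min_eq_left h
            omega
      _ ≤ min (f a) m + ∑ i ∈ s, min (f i) m := by exact Nat.add_le_add_left ih _

/-- Validity of the knapsack cover inequality: if the subfamily `R'` covers at least `k`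
elements of the color class `C`, then for every `A ⊆ R` the sets of `R' \ A` satisfy the
residual constraint `∑_{S ∈ R' \ A} min (deg(S, A)) (k(A)) ≥ k(A)`, where
`k(A) = k - |C ∩ ⋃ A|` (truncated at `0`) and `deg(S, A) = |S ∩ (C \ ⋃ A)|`. -/
theorem stmt7 {α : Type*} [Fintype α] [DecidableEq α]
    (R : Finset (Finset α)) (C : Finset α) (k : ℕ)
    (hk1 : 1 ≤ k) (hk2 : k ≤ C.card)
    (R' : Finset (Finset α)) (hR' : R' ⊆ R)
    (hcov : k ≤ ((R'.biUnion id) ∩ C).card)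
    (A : Finset (Finset α)) (hA : A ⊆ R) :
    k - (C ∩ A.biUnion id).card ≤
      ∑ S ∈ R' \ A, min (S ∩ (C \ A.biUnion id)).card (k - (C ∩ A.biUnion id).card) := by
  set U := A.biUnion id with hU
  set kA := k - (C ∩ U).card with hkA
  -- step 1: the total residual coverage is at least kA
  have hsub : ((R'.biUnion id) ∩ C) \ U ⊆ (R' \ A).biUnion (fun S => S ∩ (C \ U)) := by
    intro x hx
    simp only [Finset.mem_sdiff, Finset.mem_inter, Finset.mem_biUnion, id] at hx ⊢
    obtain ⟨⟨⟨S, hS, hxS⟩, hxC⟩, hxU⟩ := hx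
    refine ⟨S, ⟨hS, ?_⟩, hxS, hxC, hxU⟩
    intro hSA
    exact hxU (Finset.mem_biUnion.mpr ⟨S, hSA, hxS⟩)
  have hcard1 : kA ≤ (((R'.biUnion id) ∩ C) \ U).card := by
    have h1 : ((R'.biUnion id) ∩ C) ∩ U ⊆ C ∩ U := by
      intro x hx
      simp only [Finset.mem_inter] at hx ⊢
      exact ⟨hx.1.2, hx.2⟩
    have h2 := Finset.card_le_card h1
    have h3 := Finset.card_sdiff_add_card_inter ((R'.biUnion id) ∩ C) U
    omega
  have hcard2 : kA ≤ ∑ S ∈ R' \ A, (S ∩ (C \ U)).card := by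
    calc kA ≤ (((R'.biUnion id) ∩ C) \ U).card := hcard1
      _ ≤ ((R' \ A).biUnion (fun S => S ∩ (C \ U))).card := Finset.card_le_card hsub
      _ ≤ ∑ S ∈ R' \ A, (S ∩ (C \ U)).card := Finset.card_biUnion_le
  -- step 2: use min_sum_le
  have := min_sum_le (R' \ A) (fun S => (S ∩ (C \ U)).card) kA
  have hmin : min (∑ S ∈ R' \ A, (S ∩ (C \ U)).card) kA = kA := min_eq_right hcard2
  omega
end

section
/- Fix an integer m ≥ 2 and consider the Partition Set Cover instance with ground set X = {1,…,m} × {1,…,m}, sets S_i = {i} × {1,…,m} for i ∈ {1,…,m} each of weight 1, color classes C_i = S_i, and coverage requirements k_i = 1 for all i. Then: (a) every subfamily R' ⊆ {S_1,…,S_m} such that (⋃R') ∩ C_i ≠ ∅ for every i must equal {S_1,…,S_m}, hence every feasible integral solution has cost m; and (b) the fractional assignment x_i = 1/m for all i and z_e = 1/m for all e ∈ X satisfies ∑_{i : e ∈ S_i} x_i ≥ z_e for every e ∈ X and ∑_{e ∈ C_i} z_e ≥ k_i for every i, and has cost ∑_i x_i = 1. Consequently the integrality gap of the natural LP on this instance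 is at least m = √|X|. -/
open Finset

/-- The integrality gap instance: ground set `Fin m × Fin m`, sets `S i = {i} × Fin m`
(each of weight `1`), color classes `C i = S i` with requirement `1`.
(a) Any subfamily hitting every color class must use all `m` sets, so every feasible
integral solution has cost `m`; (b) the fractional solution `x ≡ 1/m`, `z ≡ 1/m` is
feasible for the natural LP and has cost `1`. Hence the integrality gap is at least
`m = √|X|`. -/
theorem stmt8 (m : ℕ) (hm : 2 ≤ m)
    (S : Fin m → Finset (Fin m × Fin m))
    (hS : ∀ i, S i = {i} ×ˢ (Finset.univ : Finset (Fin m))) :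
    -- (a) integral feasibility forces all sets, i.e. cost `m`
    (∀ I : Finset (Fin m),
      (∀ t : Fin m, ((I.biUnion S) ∩ S t).Nonempty) →
        I = Finset.univ ∧ (I.card : ℝ) * 1 = m) ∧
    -- (b) the fractional solution `x_i = 1/m`, `z_e = 1/m` is feasible with cost `1`
    (∀ e : Fin m × Fin m,
      (1 : ℝ) / m ≤ ∑ i ∈ Finset.univ.filter (fun i => e ∈ S i), (1 : ℝ) / m) ∧
    (∀ t : Fin m, (1 : ℝ) ≤ ∑ _e ∈ S t, (1 : ℝ) / m) ∧
    (∑ _i : Fin m, (1 : ℝ) / m * 1 = 1) ∧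
    -- consequently, the integrality gap is at least `m = √|X|`
    ((m : ℝ) = Real.sqrt (Fintype.card (Fin m × Fin m))) := by
  have hm0 : (0 : ℝ) < m := by positivity
  have hmem : ∀ (i : Fin m) (e : Fin m × Fin m), e ∈ S i ↔ e.1 = i := by
    intro i e
    rw [hS i]
    simp only [Finset.mem_product, Finset.mem_singleton, Finset.mem_univ, and_true]
  refine ⟨?_, ?_, ?_, ?_, ?_⟩
  · intro I hI
    have huniv : I = Finset.univ := by
      ext t
      simp only [Finset.mem_univ, iff_true]
      obtain ⟨e, he⟩ := hI t
      rw [Finset.mem_inter, Finset.mem_biUnion] at he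
      obtain ⟨⟨i, hi, hei⟩, het⟩ := he
      have h1 : e.1 = i := (hmem i e).1 hei
      have h2 : e.1 = t := (hmem t e).1 het
      rwa [(h1.symm.trans h2)] at hi
    refine ⟨huniv, ?_⟩
    rw [huniv]
    simp
  · intro e
    have : Finset.univ.filter (fun i => e ∈ S i) = {e.1} := by
      ext i
      simp [hmem i e, eq_comm]
    rw [this]
    simp
  · intro t
    rw [Finset.sum_const]
    have hcard : (S t).card = m := by
      rw [hS t]; simp
    rw [hcard, nsmul_eq_mul, mul_one_div, div_self hm0.ne']
  · rw [Finset.sum_const]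
    simp only [Finset.card_univ, Fintype.card_fin, nsmul_eq_mul, mul_one]
    field_simp
  · rw [Fintype.card_prod, Fintype.card_fin]
    push_cast
    rw [Real.sqrt_mul_self hm0.le]
end

section
/- Let F and C be finite sets (facilities and clients). Let x' : F → {0,1} and y' : F × C → {0,1} satisfy y'_{ij} ≤ x'_i for all i ∈ F, j ∈ C. Let C_t ⊆ C be a color class with integer requirement k_t such that |{j ∈ C_t : ∑_{i∈F} y'_{ij} ≥ 1}| ≥ k_t. Let H ⊆ C be arbitrary and define k_t(H) = max(0, k_t − |C_t ∩ H|). Then ∑_{i∈F} min( x'_i · k_t(H), ∑_{j ∈ C_t \ H} y'_{ij} ) ≥ k_t(H). -/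
/-!
Since `y'_{ij} ≤ x'_i`, a closed facility serves nobody, so each summand equals
`min K S_i` with `K = k_t(H)` and `S_i = ∑_{j ∈ C_t \ H} y'_{ij}`. As `min K` is subadditive,
the sum is at least `min K (∑_i S_i)`, and `∑_i S_i ≥ K` because at least `k_t - |C_t ∩ H|`
of the connected clients of `C_t` lie outside `H`.
-/

open Finset

theorem min_add_le_min_add_min {α : Type*} [AddCommMonoid α] [LinearOrder α]
    [IsOrderedAddMonoid α] [CanonicallyOrderedAdd α] (k a b : α) :
    min k (a + b) ≤ min k a + min k b := by
  rcases le_total k a with hka | hak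
  · rw [min_eq_left hka]; exact min_le_left _ _ |>.trans le_self_add
  rcases le_total k b with hkb | hbk
  · rw [min_eq_left hkb]; exact min_le_left _ _ |>.trans le_add_self
  rw [min_eq_right hak, min_eq_right hbk]
  exact min_le_right _ _

theorem Finset.min_sum_le_sum_min {ι α : Type*} [AddCommMonoid α] [LinearOrder α]
    [IsOrderedAddMonoid α] [CanonicallyOrderedAdd α] (k : α) (s : Finset ι) (f : ι → α) :
    min k (∑ i ∈ s, f i) ≤ ∑ i ∈ s, min k (f i) :=
  le_sum_of_subadditive (min k) (min_le_right _ _) (min_add_le_min_add_min k) s f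

theorem Finset.card_filter_one_le_le_sum {ι : Type*} (s : Finset ι) (f : ι → ℕ) :
    #{j ∈ s | 1 ≤ f j} ≤ ∑ j ∈ s, f j :=
  calc #{j ∈ s | 1 ≤ f j} ≤ ∑ j ∈ s with 1 ≤ f j, f j := by
        simpa using card_nsmul_le_sum _ f 1 fun j hj => (mem_filter.mp hj).2
    _ ≤ ∑ j ∈ s, f j := sum_le_sum_of_subset (filter_subset _ _)

theorem Finset.card_filter_le_card_filter_sdiff_add_card_inter {α : Type*} [DecidableEq α]
    (p : α → Prop) [DecidablePred p] (s t : Finset α) :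
    #{j ∈ s | p j} ≤ #{j ∈ s \ t | p j} + #(s ∩ t) :=
  calc #{j ∈ s | p j} = #({j ∈ s \ t | p j} ∪ {j ∈ s ∩ t | p j}) := by
        rw [← filter_union, sdiff_union_inter]
    _ ≤ #{j ∈ s \ t | p j} + #{j ∈ s ∩ t | p j} := card_union_le _ _
    _ ≤ #{j ∈ s \ t | p j} + #(s ∩ t) := Nat.add_le_add_left (card_filter_le _ _) _

theorem min_mul_left_eq_min_of_zero_or_one {x b : ℕ} (hx : x = 0 ∨ x = 1) (hb : x = 0 → b = 0)
    (a : ℕ) : min (x * a) b = min a b := by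
  rcases hx with rfl | rfl
  · simp [hb rfl]
  · rw [one_mul]

theorem stmt10_general {F : Type*} [Fintype F] {C : Type*} [DecidableEq C]
    (x' : F → ℕ) (hx : ∀ i, x' i = 0 ∨ x' i = 1)
    (y' : F → C → ℕ)
    (hyx : ∀ i j, y' i j ≤ x' i)
    (Ct : Finset C) (kt : ℕ)
    (hfeas : kt ≤ (Ct.filter (fun j => 1 ≤ ∑ i, y' i j)).card)
    (H : Finset C) :
    kt - (Ct ∩ H).card ≤
      ∑ i, min (x' i * (kt - (Ct ∩ H).card)) (∑ j ∈ Ct \ H, y' i j) := by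
  set K := kt - #(Ct ∩ H)
  have hclosed (i : F) : x' i = 0 → ∑ j ∈ Ct \ H, y' i j = 0 := fun h =>
    sum_eq_zero fun j _ => Nat.le_zero.mp (h ▸ hyx i j)
  have hconnected : K ≤ ∑ i, ∑ j ∈ Ct \ H, y' i j := by
    rw [sum_comm]
    have := hfeas.trans (card_filter_le_card_filter_sdiff_add_card_inter _ Ct H)
    have := card_filter_one_le_le_sum (Ct \ H) fun j => ∑ i, y' i j
    omega
  calc K = min K (∑ i, ∑ j ∈ Ct \ H, y' i j) := (min_eq_left hconnected).symm
    _ ≤ ∑ i, min K (∑ j ∈ Ct \ H, y' i j) := min_sum_le_sum_min _ _ _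
    _ = _ := sum_congr rfl fun i _ =>
        (min_mul_left_eq_min_of_zero_or_one (hx i) (hclosed i) K).symm

/-- Validity of the strengthened LP constraint for Facility Location: an integral
solution `(x', y')` with `y' i j ≤ x' i` connecting at least `k t` clients of the color
class `Ct` satisfies, for every set `H` of (heavy) clients, the residual constraint
`∑ i, min (x' i * kt(H)) (∑_{j ∈ Ct \ H} y' i j) ≥ kt(H)`, where
`kt(H) = kt - |Ct ∩ H|` (truncated at `0`). -/
theorem stmt10 {F : Type*} [Fintype F] {C : Type*} [Fintype C] [DecidableEq C]
    (x' : F → ℕ) (hx : ∀ i, x' i = 0 ∨ x' i = 1)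
    (y' : F → C → ℕ) (hy : ∀ i j, y' i j = 0 ∨ y' i j = 1)
    (hyx : ∀ i j, y' i j ≤ x' i)
    (Ct : Finset C) (kt : ℕ)
    (hfeas : kt ≤ (Ct.filter (fun j => 1 ≤ ∑ i, y' i j)).card)
    (H : Finset C) :
    kt - (Ct ∩ H).card ≤
      ∑ i, min (x' i * (kt - (Ct ∩ H).card)) (∑ j ∈ Ct \ H, y' i j) :=
  stmt10_general x' hx y' hyx Ct kt hfeas H
end
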